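/- arXiv:2011.13595 — 6 statements merged into one kernel-verified Lean document; each statement's English description precedes it below -/
import Mathlib

section
/- Let M > 0 and let ξ be a configuration all of whose radii are at most M. Let ρ > 0, let π be a path starting at 0 whose ρ-skeleton construction produces the times t_0 < t_1 < … < t_k with k ≥ 1, and let γ^1, …, γ^k be the sub-paths obtained by cutting the arc-length parametrized curve π at each t_i and discarding the part of π after time t_k (so γ^j consists of the portion of π between times t_{j−1} and t_j). Then τ̃(π;ξ) ≥ Σ_{j=1}^k τ̃(γ^j;ξ) − 2Mk. -/
open MeasureTheory Set

noncomputable section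

/-- Euclidean space `ℝ^d`. -/
abbrev Euc (d : ℕ) : Type := EuclideanSpace ℝ (Fin d)

/-- A configuration: a locally finite collection of open balls of `ℝ^d`, encoded by its
radius function `radius : ℝ^d → [0,∞)`, where `radius c > 0` iff `c` is the center of a
ball of the configuration (each center carries a unique radius, so a configuration is the
same as a locally finite subset of `ℝ^d × (0,∞)` whose first coordinates are distinct).
Local finiteness in `ℝ^d × (0,∞)`: every bounded region of `ℝ^d` contains finitely many
centers of radius at least `ε`, for every `ε > 0`. -/
structure Config (d : ℕ) where
  radius : Euc d → ℝ
  radius_nonneg : ∀ c, 0 ≤ radius c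
  locFin : ∀ s : Set (Euc d), Bornology.IsBounded s →
    ∀ ε : ℝ, 0 < ε → {c | c ∈ s ∧ ε ≤ radius c}.Finite

namespace Config

/-- `Σ(ξ)`: the union of the open balls of the configuration. -/
def sigma {d : ℕ} (ξ : Config d) : Set (Euc d) :=
  ⋃ c, Metric.ball c (ξ.radius c)

/-- The restriction of a configuration to a subset `S` of its centers. -/
def restrict {d : ℕ} (ξ : Config d) (S : Set (Euc d)) : Config d where
  radius := S.indicator ξ.radius
  radius_nonneg c := Set.indicator_nonneg (fun a _ => ξ.radius_nonneg a) c
  locFin s hs ε hε := by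
    refine (ξ.locFin s hs ε hε).subset ?_
    rintro c ⟨h1, h2⟩
    refine ⟨h1, ?_⟩
    by_cases h : c ∈ S
    · rwa [Set.indicator_of_mem h] at h2
    · rw [Set.indicator_of_notMem h] at h2; linarith

/-- The configuration keeping only the balls of radius `> θ`. -/
def threshold {d : ℕ} (ξ : Config d) (θ : ℝ) : Config d where
  radius c := if θ < ξ.radius c then ξ.radius c else 0
  radius_nonneg c := by
    split
    · exact ξ.radius_nonneg c
    · exact le_rfl
  locFin s hs ε hε := by
    refine (ξ.locFin s hs ε hε).subset ?_
    rintro c ⟨h1, h2⟩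
    refine ⟨h1, ?_⟩
    split_ifs at h2 with h
    · exact h2
    · linarith

end Config

variable {d : ℕ}

/-- `τ(x,y;ξ)`: the one-dimensional Lebesgue measure of `[x,y] ∖ Σ(ξ)`. -/
def segTau (ξ : Config d) (a b : Euc d) : ℝ :=
  ‖b - a‖ * (volume {t : ℝ | t ∈ Icc (0:ℝ) 1 ∧ a + t • (b - a) ∉ ξ.sigma}).toReal

/-- `ℓ(π)`: the Euclidean length of a finite sequence of points. -/
def pathLen (n : ℕ) (x : Fin (n+1) → Euc d) : ℝ :=
  ∑ i : Fin n, dist (x i.castSucc) (x i.succ)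

/-- `τ(π;ξ)`, the travel time of a path. -/
def pathTau (ξ : Config d) (n : ℕ) (x : Fin (n+1) → Euc d) : ℝ :=
  ∑ i : Fin n, segTau ξ (x i.castSucc) (x i.succ)

/-- The radius of the ball `Z_i^+(π;ξ)` removed at the left endpoint of segment `i`
(zero when the left endpoint is `x_0`, following `Z_0^+ = ∅`). -/
def leftR (ξ : Config d) {n : ℕ} (x : Fin (n+1) → Euc d) (i : Fin n) : ℝ :=
  if (i : ℕ) = 0 then 0 else ξ.radius (x i.castSucc)

/-- The radius of the ball `Z_{i+1}^-(π;ξ)` removed at the right endpoint of segment `i`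
(zero when the right endpoint is `x_n`, following `Z_n^- = ∅`). -/
def rightR (ξ : Config d) {n : ℕ} (x : Fin (n+1) → Euc d) (i : Fin n) : ℝ :=
  if (i : ℕ) + 1 = n then 0 else ξ.radius (x i.succ)

/-- The local travel time of the segment `[a,b]` with removed balls of radii `rl` at `a`
and `rr` at `b`: the length of `[a,b] ∖ (B(a,rl) ∪ B(b,rr))`. -/
def locSegTau (rl rr : ℝ) (a b : Euc d) : ℝ :=
  ‖b - a‖ * (volume {t : ℝ | t ∈ Icc (0:ℝ) 1 ∧
    a + t • (b - a) ∉ Metric.ball a rl ∪ Metric.ball b rr}).toReal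

/-- `τ̃(π;ξ)`, the local travel time of a finite sequence of points. -/
def pathLocTau (ξ : Config d) (n : ℕ) (x : Fin (n+1) → Euc d) : ℝ :=
  ∑ i : Fin n, locSegTau (leftR ξ x i) (rightR ξ x i) (x i.castSucc) (x i.succ)

/-- `π` is a `ξ`-good path: interior points are centers of `ξ`, and on each segment the
removed set `Z_{i-1}^+ ∪ Z_i^-` coincides with `Σ(ξ)`. -/
def IsGood (ξ : Config d) (n : ℕ) (x : Fin (n+1) → Euc d) : Prop :=
  (∀ i : Fin (n+1), 0 < (i : ℕ) → (i : ℕ) < n → 0 < ξ.radius (x i)) ∧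
  ∀ i : Fin n,
    segment ℝ (x i.castSucc) (x i.succ) ∩
      (Metric.ball (x i.castSucc) (leftR ξ x i) ∪ Metric.ball (x i.succ) (rightR ξ x i)) =
    segment ℝ (x i.castSucc) (x i.succ) ∩ ξ.sigma

/-- `T(A,B;ξ)`: the infimum of travel times over paths (sequences of distinct points)
from `A` to `B`; `T(a,b;ξ)` is the special case `A = {a}`, `B = {b}`. -/
def Ttime (ξ : Config d) (A B : Set (Euc d)) : ℝ :=
  sInf {v : ℝ | ∃ (n : ℕ) (x : Fin (n+1) → Euc d), Function.Injective x ∧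
    x 0 ∈ A ∧ x (Fin.last n) ∈ B ∧ v = pathTau ξ n x}

/-- `T^□(a_0,…,a_k;ξ)`: infimum over pairwise disjoint finite subsets `ξ^1,…,ξ^k` of `ξ`
(given by disjoint finite sets of centers) of `Σ_j T(a_{j-1},a_j;ξ^j)`. -/
def TSq (ξ : Config d) (k : ℕ) (a : ℕ → Euc d) : ℝ :=
  sInf {v : ℝ | ∃ S : ℕ → Set (Euc d),
    (∀ j, (S j).Finite) ∧
    (∀ j, ∀ c ∈ S j, 0 < ξ.radius c) ∧
    (∀ i j, i < k → j < k → i ≠ j → Disjoint (S i) (S j)) ∧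
    v = ∑ j ∈ Finset.range k, Ttime (ξ.restrict (S j)) {a j} {a (j+1)}}

/-- The greedy functional `G(s;ξ)`: the supremum of `r(π;ξ)/ℓ(π)` over paths starting at
`0`, with at least two points, and at least one point outside the open ball `B(0,s)`. -/
def greedyG (ξ : Config d) (s : ℝ) : ℝ :=
  sSup {g : ℝ | ∃ (n : ℕ) (x : Fin (n+1) → Euc d), Function.Injective x ∧ 1 ≤ n ∧
    x 0 = 0 ∧ (∃ i : Fin (n+1), s ≤ ‖x i‖) ∧
    g = (∑ i : Fin (n+1), ξ.radius (x i)) / pathLen n x}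

/-- The vertices of a path, clamped: `clampPt n x j = x_{min(j,n)}`. -/
def clampPt (n : ℕ) (x : Fin (n+1) → Euc d) (j : ℕ) : Euc d :=
  x ⟨min j n, Nat.lt_succ_of_le (min_le_right j n)⟩

/-- Cumulative length of the first `j` segments of the path. -/
def cumLen (n : ℕ) (x : Fin (n+1) → Euc d) (j : ℕ) : ℝ :=
  ∑ i ∈ Finset.range j, dist (clampPt n x i) (clampPt n x (i+1))

/-- Index of the segment containing the arc-length parameter `t`. -/
def segIdx (n : ℕ) (x : Fin (n+1) → Euc d) (t : ℝ) : ℕ :=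
  sSup {j : ℕ | j ≤ n ∧ cumLen n x j ≤ t}

/-- The arc-length parametrization `[0,ℓ(π)] → ℝ^d` of the path. -/
def pathParam (n : ℕ) (x : Fin (n+1) → Euc d) (t : ℝ) : Euc d :=
  clampPt n x (segIdx n x t) +
    ((t - cumLen n x (segIdx n x t)) /
        dist (clampPt n x (segIdx n x t)) (clampPt n x (segIdx n x t + 1))) •
      (clampPt n x (segIdx n x t + 1) - clampPt n x (segIdx n x t))

/-- `(a_0,…,a_k)`, together with the times `(t_0,…,t_k)`, is the `ρ`-skeleton of the path
`π` (viewed as an arc-length parametrized curve): `t_0 = 0`, `a_i = π(t_i)`, each `t_{i+1}`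
is the first time after `t_i` at which the curve meets the sphere `S(a_i,ρ)`, and after
time `t_k` the curve stays inside the open ball `B(a_k,ρ)`. -/
structure IsSkeleton (n : ℕ) (x : Fin (n+1) → Euc d) (ρ : ℝ) (k : ℕ)
    (a : ℕ → Euc d) (t : ℕ → ℝ) : Prop where
  t_zero : t 0 = 0
  a_eq : ∀ i ≤ k, a i = pathParam n x (t i)
  t_mono : ∀ i < k, t i < t (i + 1)
  t_mem : ∀ i ≤ k, 0 ≤ t i ∧ t i ≤ pathLen n x
  stays : ∀ i < k, ∀ s, t i ≤ s → s < t (i + 1) → pathParam n x s ∈ Metric.ball (a i) ρ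
  exits : ∀ i < k, dist (pathParam n x (t (i + 1))) (a i) = ρ
  final : ∀ s, t k ≤ s → s ≤ pathLen n x → pathParam n x s ∈ Metric.ball (a k) ρ

/-- `γ` (given by `m` segments with vertices `y`) is the sub-path of `π` obtained by
cutting the arc-length parametrized curve of `π` between the times `u` and `v`: its
points are the points `π(s_i)` for strictly increasing times `s_0 = u < s_1 < … < s_m = v`
whose interior ones are exactly the passage times at the vertices of `π` lying strictly
between `u` and `v`. -/
def IsCut {d : ℕ} (n : ℕ) (x : Fin (n+1) → Euc d) (u v : ℝ)
    (m : ℕ) (y : Fin (m+1) → Euc d) : Prop :=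
  ∃ s : Fin (m+1) → ℝ,
    s 0 = u ∧ s (Fin.last m) = v ∧ StrictMono s ∧
    (∀ i, y i = pathParam n x (s i)) ∧
    (∀ i : Fin (m+1), 0 < (i : ℕ) → (i : ℕ) < m → ∃ j ≤ n, s i = cumLen n x j) ∧
    (∀ j ≤ n, u < cumLen n x j → cumLen n x j < v →
      ∃ i : Fin (m+1), 0 < (i : ℕ) ∧ (i : ℕ) < m ∧ s i = cumLen n x j)

/-!
Parametrize `π` by arc length and call a time free when the point of `π` at that time lies
outside the balls `Z` removed on its segment; `τ̃(π;ξ)` bounds the measure of the free times.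
The sub-path `γ^j` is `π` restricted to `[t_{j-1}, t_j]`, and at each of its vertices other than
its two endpoints it removes the same ball as `π`. At its endpoints `γ^j` removes nothing while
`π` may remove a ball of radius at most `M`, so a free time of `γ^j` is a free time of `π` unless
it lies within `M` of `t_{j-1}` or of `t_j`. Hence `τ̃(γ^j;ξ)` is at most the measure of the
free times of `π` in `(t_{j-1}, t_j)` plus `2M`, and these intervals are disjoint.
-/

lemma sum_measure_Ioo_le (μ : Measure ℝ) {m : ℕ} {s : Fin (m+1) → ℝ} (hs : Monotone s) :
    ∑ i : Fin m, μ (Ioo (s i.castSucc) (s i.succ)) ≤ μ (Ioo (s 0) (s (Fin.last m))) := by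
  induction m with
  | zero => simp
  | succ m ih =>
    have hsub : Ioo (s 0) (s (Fin.last m).castSucc) ∪ Ioo (s (Fin.last m).castSucc)
        (s (Fin.last (m+1))) ⊆ Ioo (s 0) (s (Fin.last (m+1))) :=
      union_subset (Ioo_subset_Ioo_right (hs (Fin.le_last _)))
        (Ioo_subset_Ioo_left (hs (Fin.zero_le _)))
    calc ∑ i : Fin (m+1), μ (Ioo (s i.castSucc) (s i.succ))
        = ∑ i : Fin m, μ (Ioo (s i.castSucc.castSucc) (s i.succ.castSucc)) +
            μ (Ioo (s (Fin.last m).castSucc) (s (Fin.last (m+1)))) := by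
          rw [Fin.sum_univ_castSucc]
          simp only [Fin.succ_castSucc, Fin.succ_last]
      _ ≤ μ (Ioo (s 0) (s (Fin.last m).castSucc)) +
            μ (Ioo (s (Fin.last m).castSucc) (s (Fin.last (m+1)))) := by
          gcongr
          exact ih (hs.comp Fin.strictMono_castSucc.monotone)
      _ = μ (Ioo (s 0) (s (Fin.last m).castSucc) ∪
            Ioo (s (Fin.last m).castSucc) (s (Fin.last (m+1)))) :=
          (measure_union (disjoint_left.2 fun _ h1 h2 => lt_asymm h1.2 h2.1) measurableSet_Ioo).symm
      _ ≤ μ (Ioo (s 0) (s (Fin.last (m+1)))) := measure_mono hsub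

lemma sum_volume_real_Ioo_inter_le (A : Set ℝ) {m : ℕ} {s : Fin (m+1) → ℝ}
    (hs : Monotone s) :
    ∑ i : Fin m, volume.real (Ioo (s i.castSucc) (s i.succ) ∩ A) ≤
      volume.real (Ioo (s 0) (s (Fin.last m)) ∩ A) := by
  have hfin : ∀ a b, volume (Ioo a b ∩ A) ≠ ⊤ := fun a b =>
    ((measure_mono inter_subset_left).trans_lt measure_Ioo_lt_top).ne
  have key := sum_measure_Ioo_le (volume.restrict A) hs
  simp only [Measure.restrict_apply measurableSet_Ioo] at key
  simp only [measureReal_def]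
  rw [← ENNReal.toReal_sum fun i _ => hfin _ _]
  exact ENNReal.toReal_mono (hfin _ _) key

lemma pathLocTau_nonneg (ξ : Config d) (n : ℕ) (x : Fin (n+1) → Euc d) :
    0 ≤ pathLocTau ξ n x := by
  unfold pathLocTau locSegTau
  positivity

lemma sum_Icc_one_eq_sum_fin {β : Type*} [AddCommMonoid β] (k : ℕ) (g : ℕ → β) :
    ∑ j ∈ Finset.Icc 1 k, g j = ∑ i : Fin k, g (i + 1) := by
  rw [Fin.sum_univ_eq_sum_range (fun i => g (i + 1)), Finset.range_eq_Ico,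
    Finset.sum_Ico_add' g 0 k 1, zero_add, Finset.Ico_add_one_right_eq_Icc]

lemma locSegTau_eq_volume_real {f : ℝ → Euc d} {u v : ℝ} (huv : u < v)
    (hf : ∀ r ∈ Icc u v, f r = f u + ((r - u) / (v - u)) • (f v - f u))
    (hlen : ‖f v - f u‖ = v - u) (rl rr : ℝ) :
    locSegTau rl rr (f u) (f v) =
      volume.real
        {r | r ∈ Icc u v ∧ f r ∉ Metric.ball (f u) rl ∪ Metric.ball (f v) rr} := by
  set S := Metric.ball (f u) rl ∪ Metric.ball (f v) rr
  have hvu : 0 < v - u := sub_pos.2 huv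
  have hset : {θ : ℝ | θ ∈ Icc 0 1 ∧ f u + θ • (f v - f u) ∉ S} =
      (fun θ => u + (v - u) * θ) ⁻¹' {r | r ∈ Icc u v ∧ f r ∉ S} := by
    ext θ
    have hθ : θ ∈ Icc (0 : ℝ) 1 ↔ u + (v - u) * θ ∈ Icc u v := by
      simp only [mem_Icc]
      constructor <;> rintro ⟨h0, h1⟩ <;> constructor <;> nlinarith
    simp only [mem_ofPred_eq, mem_preimage, ← hθ, and_congr_right_iff]
    intro h
    rw [hf _ (hθ.1 h), add_sub_cancel_left, mul_div_cancel_left₀ _ hvu.ne']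
  have hcomp : (fun θ : ℝ => u + (v - u) * θ) = (u + ·) ∘ ((v - u) * ·) := rfl
  rw [locSegTau, hset, hcomp, preimage_comp, Real.volume_preimage_mul_left hvu.ne',
    measure_preimage_add, ENNReal.toReal_mul, ENNReal.toReal_ofReal (abs_nonneg _),
    abs_of_pos (inv_pos.2 hvu), hlen, ← mul_assoc, mul_inv_cancel₀ hvu.ne', one_mul]
  rfl

lemma leftR_le_radius (ξ : Config d) {n : ℕ} (x : Fin (n+1) → Euc d) (i : Fin n) :
    leftR ξ x i ≤ ξ.radius (x i.castSucc) := by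
  unfold leftR
  split_ifs
  exacts [ξ.radius_nonneg _, le_rfl]

lemma rightR_le_radius (ξ : Config d) {n : ℕ} (x : Fin (n+1) → Euc d) (i : Fin n) :
    rightR ξ x i ≤ ξ.radius (x i.succ) := by
  unfold rightR
  split_ifs
  exacts [ξ.radius_nonneg _, le_rfl]

/-- The arc-length times on the segment `q` of `π` whose point lies outside the removed balls
`Z_q^+ ∪ Z_{q+1}^-`. -/
def freeTimes (ξ : Config d) (n : ℕ) (x : Fin (n+1) → Euc d) (q : Fin n) : Set ℝ :=
  {r | r ∈ Icc (cumLen n x q) (cumLen n x (q+1)) ∧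
    pathParam n x r ∉ Metric.ball (x q.castSucc) (leftR ξ x q) ∪
      Metric.ball (x q.succ) (rightR ξ x q)}

namespace ArcLength

variable {n : ℕ} {x : Fin (n+1) → Euc d}

lemma clampPt_of_le {j : ℕ} (h : j ≤ n) : clampPt n x j = x ⟨j, Nat.lt_succ_of_le h⟩ := by
  simp only [clampPt, min_eq_left h]

lemma cumLen_zero : cumLen n x 0 = 0 := by
  simp [cumLen]

lemma cumLen_mono : Monotone (cumLen n x) := fun _ _ h =>
  Finset.sum_le_sum_of_subset_of_nonneg (Finset.range_subset_range.2 h)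
    fun _ _ _ => dist_nonneg

lemma cumLen_last : cumLen n x n = pathLen n x := by
  rw [cumLen, ← Fin.sum_univ_eq_sum_range (fun j => dist (clampPt n x j) (clampPt n x (j+1)))]
  refine Finset.sum_congr rfl fun i _ => ?_
  rw [clampPt_of_le i.is_lt.le, clampPt_of_le i.is_lt]
  rfl

lemma cumLen_succ_sub (i : Fin n) :
    cumLen n x (i+1) - cumLen n x i = dist (x i.castSucc) (x i.succ) := by
  rw [cumLen, cumLen, Finset.sum_range_succ, add_sub_cancel_left, clampPt_of_le i.is_lt.le,
    clampPt_of_le i.is_lt]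
  rfl

lemma cumLen_lt_succ (hinj : Function.Injective x) (i : Fin n) :
    cumLen n x i < cumLen n x (i+1) := by
  have hne : x i.castSucc ≠ x i.succ := hinj.ne Fin.castSucc_lt_succ.ne
  linarith [cumLen_succ_sub (x := x) i, dist_pos.2 hne]

lemma cumLen_strictMonoOn (hinj : Function.Injective x) : StrictMonoOn (cumLen n x) (Iic n) :=
  strictMonoOn_Iic_of_lt_succ fun j hj => by
    simpa only [Order.succ_eq_add_one] using cumLen_lt_succ hinj ⟨j, hj⟩

lemma segIdx_eq {p : ℕ} (hp : p ≤ n) {r : ℝ} (hpr : cumLen n x p ≤ r)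
    (hrp : p = n ∨ r < cumLen n x (p+1)) : segIdx n x r = p := by
  have hmem : p ∈ {j : ℕ | j ≤ n ∧ cumLen n x j ≤ r} := ⟨hp, hpr⟩
  have hub : ∀ j ∈ {j : ℕ | j ≤ n ∧ cumLen n x j ≤ r}, j ≤ p := by
    rintro j ⟨hjn, hjr⟩
    rcases hrp with rfl | hrp
    · exact hjn
    · by_contra! hpj
      linarith [cumLen_mono (x := x) (Nat.succ_le_of_lt hpj)]
  exact le_antisymm (csSup_le ⟨p, hmem⟩ hub) (le_csSup ⟨p, hub⟩ hmem)

lemma pathParam_cumLen (hinj : Function.Injective x) (q : Fin (n+1)) :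
    pathParam n x (cumLen n x q) = x q := by
  have hq : segIdx n x (cumLen n x q) = q := by
    refine segIdx_eq (Nat.lt_succ_iff.1 q.is_lt) le_rfl ?_
    rcases (Nat.lt_succ_iff.1 q.is_lt).lt_or_eq with h | h
    · exact Or.inr (cumLen_lt_succ hinj ⟨q, h⟩)
    · exact Or.inl h
  rw [pathParam, hq, sub_self, zero_div, zero_smul, add_zero,
    clampPt_of_le (Nat.lt_succ_iff.1 q.is_lt)]

lemma pathParam_cumLen_castSucc (hinj : Function.Injective x) (p : Fin n) :
    pathParam n x (cumLen n x p) = x p.castSucc :=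
  pathParam_cumLen hinj p.castSucc

lemma pathParam_cumLen_succ (hinj : Function.Injective x) (p : Fin n) :
    pathParam n x (cumLen n x (p+1)) = x p.succ :=
  pathParam_cumLen hinj p.succ

lemma pathParam_of_mem (hinj : Function.Injective x) (p : Fin n) {r : ℝ}
    (hr : r ∈ Icc (cumLen n x p) (cumLen n x (p+1))) :
    pathParam n x r = x p.castSucc +
      ((r - cumLen n x p) / dist (x p.castSucc) (x p.succ)) • (x p.succ - x p.castSucc) := by
  rcases hr.2.lt_or_eq with hlt | rfl
  · rw [pathParam, segIdx_eq p.is_lt.le hr.1 (Or.inr hlt), clampPt_of_le p.is_lt.le,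
      clampPt_of_le p.is_lt]
    rfl
  · have hD : dist (x p.castSucc) (x p.succ) ≠ 0 :=
      (cumLen_succ_sub (x := x) p ▸ sub_pos.2 (cumLen_lt_succ hinj p)).ne'
    rw [cumLen_succ_sub, div_self hD, one_smul, add_sub_cancel, ← Fin.val_succ,
      pathParam_cumLen hinj]

lemma pathParam_sub_pathParam (hinj : Function.Injective x) (p : Fin n) {u v : ℝ}
    (hu : u ∈ Icc (cumLen n x p) (cumLen n x (p+1)))
    (hv : v ∈ Icc (cumLen n x p) (cumLen n x (p+1))) :
    pathParam n x v - pathParam n x u =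
      ((v - u) / dist (x p.castSucc) (x p.succ)) • (x p.succ - x p.castSucc) := by
  rw [pathParam_of_mem hinj p hu, pathParam_of_mem hinj p hv, add_sub_add_left_eq_sub,
    ← sub_smul]
  congr 1
  ring

lemma dist_pathParam (hinj : Function.Injective x) (p : Fin n) {u v : ℝ}
    (hu : u ∈ Icc (cumLen n x p) (cumLen n x (p+1)))
    (hv : v ∈ Icc (cumLen n x p) (cumLen n x (p+1))) :
    dist (pathParam n x u) (pathParam n x v) = |u - v| := by
  have hD : 0 < dist (x p.castSucc) (x p.succ) :=
    cumLen_succ_sub (x := x) p ▸ sub_pos.2 (cumLen_lt_succ hinj p)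
  rw [dist_eq_norm, pathParam_sub_pathParam hinj p hv hu, norm_smul, ← dist_eq_norm,
    dist_comm (x p.succ), Real.norm_eq_abs, abs_div, abs_of_pos hD, div_mul_cancel₀ _ hD.ne']

lemma dist_pathParam_castSucc (hinj : Function.Injective x) (p : Fin n) {r : ℝ}
    (hr : r ∈ Icc (cumLen n x p) (cumLen n x (p+1))) :
    dist (pathParam n x r) (x p.castSucc) = r - cumLen n x p := by
  rw [← pathParam_cumLen_castSucc hinj, dist_pathParam hinj p hr
    ⟨le_rfl, (cumLen_lt_succ hinj p).le⟩, abs_of_nonneg (sub_nonneg.2 hr.1)]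

lemma dist_pathParam_succ (hinj : Function.Injective x) (p : Fin n) {r : ℝ}
    (hr : r ∈ Icc (cumLen n x p) (cumLen n x (p+1))) :
    dist (pathParam n x r) (x p.succ) = cumLen n x (p+1) - r := by
  rw [← pathParam_cumLen_succ hinj, dist_pathParam hinj p hr
    ⟨(cumLen_lt_succ hinj p).le, le_rfl⟩, abs_of_nonpos (sub_nonpos.2 hr.2), neg_sub]

lemma cumLen_lt_cumLen_iff (hinj : Function.Injective x) {i j : ℕ} (hi : i ≤ n) (hj : j ≤ n) :
    cumLen n x i < cumLen n x j ↔ i < j :=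
  (cumLen_strictMonoOn hinj).lt_iff_lt hi hj

lemma exists_segment_of_cut (hinj : Function.Injective x) {u v : ℝ} (hu : 0 ≤ u)
    (hv : v ≤ pathLen n x) {m : ℕ} {s : Fin (m+1) → ℝ} (hs0 : s 0 = u)
    (hsm : s (Fin.last m) = v) (hs : StrictMono s)
    (hint : ∀ i : Fin (m+1), 0 < (i : ℕ) → (i : ℕ) < m → ∃ j ≤ n, s i = cumLen n x j)
    (hcomp : ∀ j ≤ n, u < cumLen n x j → cumLen n x j < v →
      ∃ i : Fin (m+1), 0 < (i : ℕ) ∧ (i : ℕ) < m ∧ s i = cumLen n x j)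
    (i : Fin m) :
    ∃ p : Fin n, cumLen n x p ≤ s i.castSucc ∧ s i.succ ≤ cumLen n x (p+1) ∧
      (0 < (i : ℕ) → s i.castSucc = cumLen n x p) ∧
      ((i : ℕ) + 1 < m → s i.succ = cumLen n x (p+1)) := by
  have hu_le : u ≤ s i.castSucc := hs0 ▸ hs.monotone (Fin.zero_le _)
  have hle_v : s i.succ ≤ v := hsm ▸ hs.monotone (Fin.le_last _)
  have hlt : s i.castSucc < s i.succ := hs Fin.castSucc_lt_succ
  set p := Nat.findGreatest (fun q => cumLen n x q ≤ s i.castSucc) n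
  have hp : cumLen n x p ≤ s i.castSucc :=
    Nat.findGreatest_spec (P := fun q => cumLen n x q ≤ s i.castSucc) (Nat.zero_le n)
      (by rw [cumLen_zero]; linarith)
  have hpn : p < n := by
    refine (Nat.findGreatest_le n).lt_of_ne fun h => ?_
    rw [show p = n from h, cumLen_last] at hp
    linarith
  have hnext : s i.castSucc < cumLen n x (p+1) :=
    not_le.1 (Nat.findGreatest_is_greatest (Nat.lt_succ_self p) hpn)
  have hsucc : s i.succ ≤ cumLen n x (p+1) := by
    by_contra! h
    obtain ⟨l, -, -, hl⟩ := hcomp (p+1) hpn (by linarith) (by linarith)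
    have h1 : i.castSucc < l := hs.lt_iff_lt.1 (hl ▸ hnext)
    have h2 : l < i.succ := hs.lt_iff_lt.1 (hl ▸ h)
    rw [Fin.lt_def, Fin.val_castSucc] at h1
    rw [Fin.lt_def, Fin.val_succ] at h2
    omega
  refine ⟨⟨p, hpn⟩, hp, hsucc, fun hi => ?_, fun hi => ?_⟩
  · obtain ⟨j, hj, hsj⟩ := hint i.castSucc hi (by simp)
    rw [hsj] at hp hnext ⊢
    rw [cumLen_lt_cumLen_iff hinj hj hpn] at hnext
    have : ¬ j < p := fun h => (cumLen_lt_cumLen_iff hinj hj hpn.le).2 h |>.not_ge hp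
    obtain rfl : j = p := by omega
    rfl
  · obtain ⟨j, hj, hsj⟩ := hint i.succ (by simp) (by simpa using hi)
    rw [hsj] at hsucc hlt ⊢
    have h1 : p < j := (cumLen_lt_cumLen_iff hinj hpn.le hj).1 (hp.trans_lt hlt)
    have h2 : ¬ p + 1 < j := fun h => (cumLen_lt_cumLen_iff hinj hpn hj).2 h |>.not_ge hsucc
    obtain rfl : j = p + 1 := by omega
    rfl

lemma locSegTau_pathParam (hinj : Function.Injective x) (p : Fin n) {u v : ℝ}
    (hu : cumLen n x p ≤ u) (huv : u < v) (hv : v ≤ cumLen n x (p+1)) (rl rr : ℝ) :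
    locSegTau rl rr (pathParam n x u) (pathParam n x v) =
      volume.real {r | r ∈ Icc u v ∧ pathParam n x r ∉
        Metric.ball (pathParam n x u) rl ∪ Metric.ball (pathParam n x v) rr} := by
  have hmem : ∀ r ∈ Icc u v, r ∈ Icc (cumLen n x p) (cumLen n x (p+1)) :=
    fun r hr => ⟨hu.trans hr.1, hr.2.trans hv⟩
  have hu' := hmem u ⟨le_rfl, huv.le⟩
  have hv' := hmem v ⟨huv.le, le_rfl⟩
  refine locSegTau_eq_volume_real huv (fun r hr => ?_) ?_ rl rr
  · rw [pathParam_sub_pathParam hinj p hu' hv', smul_smul, ← sub_eq_iff_eq_add',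
      pathParam_sub_pathParam hinj p hu' (hmem r hr)]
    congr 1
    field_simp [(sub_pos.2 huv).ne']
  · rw [← dist_eq_norm, dist_pathParam hinj p hv' hu', abs_of_pos (sub_pos.2 huv)]

lemma pathLocTau_eq_sum_freeTimes (ξ : Config d) (hinj : Function.Injective x) :
    pathLocTau ξ n x = ∑ q, volume.real (freeTimes ξ n x q) := by
  refine Finset.sum_congr rfl fun q _ => ?_
  have h := locSegTau_pathParam hinj q le_rfl (cumLen_lt_succ hinj q) le_rfl
    (leftR ξ x q) (rightR ξ x q)
  rwa [pathParam_cumLen_castSucc hinj, pathParam_cumLen_succ hinj] at h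

lemma volume_iUnion_freeTimes_le (ξ : Config d) (hinj : Function.Injective x) :
    volume (⋃ q, freeTimes ξ n x q) ≤ ENNReal.ofReal (pathLocTau ξ n x) := by
  have hfin : ∀ q, volume (freeTimes ξ n x q) ≠ ⊤ := fun q =>
    ((measure_mono fun _ hr => hr.1).trans_lt measure_Icc_lt_top).ne
  rw [pathLocTau_eq_sum_freeTimes ξ hinj,
    ENNReal.ofReal_sum_of_nonneg fun _ _ => measureReal_nonneg]
  simp only [ofReal_measureReal (hfin _)]
  exact measure_iUnion_fintype_le _ _

/-- The cut removes the same ball as `π` at each of its vertices other than its two endpoints,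
where `π` removes a ball of radius at most `M` and the cut removes nothing. -/
lemma mem_freeTimes_of_cut (ξ : Config d) (hinj : Function.Injective x) {M : ℝ}
    (hrad : ∀ c, ξ.radius c ≤ M) {u v : ℝ} {m : ℕ} {s : Fin (m+1) → ℝ}
    {y : Fin (m+1) → Euc d} (hs0 : s 0 = u) (hsm : s (Fin.last m) = v)
    (hy : ∀ i, y i = pathParam n x (s i)) {i : Fin m} {p : Fin n}
    (hp : cumLen n x p ≤ s i.castSucc) (hp' : s i.succ ≤ cumLen n x (p+1))
    (hleft : 0 < (i : ℕ) → s i.castSucc = cumLen n x p)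
    (hright : (i : ℕ) + 1 < m → s i.succ = cumLen n x (p+1))
    {r : ℝ} (hr : r ∈ Ioo (s i.castSucc) (s i.succ))
    (hfree : pathParam n x r ∉
      Metric.ball (y i.castSucc) (leftR ξ y i) ∪ Metric.ball (y i.succ) (rightR ξ y i)) :
    r ∈ (⋃ q, freeTimes ξ n x q) ∪ Ioo u (u + M) ∪ Ioo (v - M) v := by
  have hrp : r ∈ Icc (cumLen n x p) (cumLen n x (p+1)) :=
    ⟨hp.trans hr.1.le, hr.2.le.trans hp'⟩
  by_cases hL : pathParam n x r ∈ Metric.ball (x p.castSucc) (leftR ξ x p)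
  · rcases Nat.eq_zero_or_pos i with hi | hi
    · have hsu : s i.castSucc = u := hs0 ▸ congrArg s (Fin.ext hi)
      rw [Metric.mem_ball, dist_pathParam_castSucc hinj p hrp] at hL
      have := (leftR_le_radius ξ x p).trans (hrad _)
      exact Or.inl (Or.inr ⟨hsu ▸ hr.1, by linarith⟩)
    · have hyi : leftR ξ y i = ξ.radius (x p.castSucc) := by
        rw [leftR, if_neg hi.ne', hy, hleft hi, pathParam_cumLen_castSucc hinj]
      refine absurd (Or.inl ?_) hfree
      rw [hy, hleft hi, pathParam_cumLen_castSucc hinj]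
      exact Metric.ball_subset_ball (hyi ▸ leftR_le_radius ξ x p) hL
  by_cases hR : pathParam n x r ∈ Metric.ball (x p.succ) (rightR ξ x p)
  · rcases (Nat.succ_le_of_lt i.is_lt).eq_or_lt with hi | hi
    · have hsv : s i.succ = v := hsm ▸ congrArg s (Fin.ext hi)
      rw [Metric.mem_ball, dist_pathParam_succ hinj p hrp] at hR
      have := (rightR_le_radius ξ x p).trans (hrad _)
      exact Or.inr ⟨by linarith, hsv ▸ hr.2⟩
    · have hyi : rightR ξ y i = ξ.radius (x p.succ) := by
        rw [rightR, if_neg hi.ne, hy, hright hi, pathParam_cumLen_succ hinj]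
      refine absurd (Or.inr ?_) hfree
      rw [hy, hright hi, pathParam_cumLen_succ hinj]
      exact Metric.ball_subset_ball (hyi ▸ rightR_le_radius ξ x p) hR
  exact Or.inl (Or.inl (mem_iUnion.2 ⟨p, hrp, not_or.2 ⟨hL, hR⟩⟩))

lemma pathLocTau_le_of_isCut (ξ : Config d) (hinj : Function.Injective x) {M : ℝ}
    (hrad : ∀ c, ξ.radius c ≤ M) {u v : ℝ} (hu : 0 ≤ u) (hv : v ≤ pathLen n x) {m : ℕ}
    {y : Fin (m+1) → Euc d} (hcut : IsCut n x u v m y) :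
    pathLocTau ξ m y ≤ volume.real (Ioo u v ∩ ⋃ q, freeTimes ξ n x q) + 2 * M := by
  obtain ⟨s, hs0, hsm, hs, hy, hint, hcomp⟩ := hcut
  set F := ⋃ q, freeTimes ξ n x q
  set G := F ∪ Ioo u (u + M) ∪ Ioo (v - M) v
  have hM : 0 ≤ M := (ξ.radius_nonneg 0).trans (hrad 0)
  have hseg : ∀ i : Fin m, locSegTau (leftR ξ y i) (rightR ξ y i) (y i.castSucc) (y i.succ) ≤
      volume.real (Ioo (s i.castSucc) (s i.succ) ∩ G) := by
    intro i
    obtain ⟨p, hp, hp', hleft, hright⟩ :=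
      exists_segment_of_cut hinj hu hv hs0 hsm hs hint hcomp i
    rw [hy i.castSucc, hy i.succ,
      locSegTau_pathParam hinj p hp (hs Fin.castSucc_lt_succ) hp', ← hy, ← hy]
    have hsub : {r | r ∈ Icc (s i.castSucc) (s i.succ) ∧ pathParam n x r ∉
        Metric.ball (y i.castSucc) (leftR ξ y i) ∪ Metric.ball (y i.succ) (rightR ξ y i)} ⊆
        (Ioo (s i.castSucc) (s i.succ) ∩ G) ∪ {s i.castSucc, s i.succ} := by
      rintro r ⟨hr, hfree⟩
      by_cases hend : r = s i.castSucc ∨ r = s i.succ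
      · exact Or.inr hend
      push Not at hend
      have hrI : r ∈ Ioo (s i.castSucc) (s i.succ) :=
        ⟨hr.1.lt_of_ne hend.1.symm, hr.2.lt_of_ne hend.2⟩
      exact Or.inl
        ⟨hrI, mem_freeTimes_of_cut ξ hinj hrad hs0 hsm hy hp hp' hleft hright hrI hfree⟩
    calc _ ≤ volume.real ((Ioo (s i.castSucc) (s i.succ) ∩ G) ∪ {s i.castSucc, s i.succ}) :=
          measureReal_mono hsub (((Metric.isBounded_Ioo _ _).subset inter_subset_left).union
            (toFinite _).isBounded).measure_lt_top.ne
      _ ≤ volume.real (Ioo (s i.castSucc) (s i.succ) ∩ G) +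
            volume.real ({s i.castSucc, s i.succ} : Set ℝ) := measureReal_union_le _ _
      _ = _ := by
          rw [add_eq_left, measureReal_def, (toFinite _).measure_zero, ENNReal.toReal_zero]
  have hends : Ioo u v ∩ G ⊆ (Ioo u v ∩ F) ∪ Ioo u (u + M) ∪ Ioo (v - M) v := by
    rintro r ⟨hr, (hF | hL) | hR⟩
    exacts [Or.inl (Or.inl ⟨hr, hF⟩), Or.inl (Or.inr hL), Or.inr hR]
  calc pathLocTau ξ m y ≤ ∑ i : Fin m, volume.real (Ioo (s i.castSucc) (s i.succ) ∩ G) :=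
        Finset.sum_le_sum fun i _ => hseg i
    _ ≤ volume.real (Ioo u v ∩ G) := hs0 ▸ hsm ▸ sum_volume_real_Ioo_inter_le G hs.monotone
    _ ≤ volume.real ((Ioo u v ∩ F) ∪ Ioo u (u + M) ∪ Ioo (v - M) v) :=
        measureReal_mono hends ((((Metric.isBounded_Ioo u v).subset inter_subset_left).union
          (Metric.isBounded_Ioo _ _)).union (Metric.isBounded_Ioo _ _)).measure_lt_top.ne
    _ ≤ volume.real (Ioo u v ∩ F) + volume.real (Ioo u (u + M)) +
          volume.real (Ioo (v - M) v) :=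
        (measureReal_union_le _ _).trans (add_le_add_left (measureReal_union_le _ _) _)
    _ = volume.real (Ioo u v ∩ F) + 2 * M := by
        rw [Real.volume_real_Ioo_of_le (by linarith), Real.volume_real_Ioo_of_le (by linarith)]
        ring

end ArcLength

open ArcLength in
theorem stmt3_general {d : ℕ} (M : ℝ)
    (ξ : Config d) (hrad : ∀ c, ξ.radius c ≤ M)
    (ρ : ℝ)
    (n : ℕ) (x : Fin (n+1) → Euc d) (hinj : Function.Injective x)
    (k : ℕ) (a : ℕ → Euc d) (t : ℕ → ℝ)
    (hsk : IsSkeleton n x ρ k a t)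
    (m : ℕ → ℕ) (y : (j : ℕ) → Fin (m j + 1) → Euc d)
    (hcut : ∀ j, 1 ≤ j → j ≤ k → IsCut n x (t (j-1)) (t j) (m j) (y j)) :
    pathLocTau ξ n x ≥ (∑ j ∈ Finset.Icc 1 k, pathLocTau ξ (m j) (y j)) - 2 * M * k := by
  set F := ⋃ q, freeTimes ξ n x q
  have hcut_le : ∀ j ∈ Finset.Icc 1 k,
      pathLocTau ξ (m j) (y j) ≤ volume.real (Ioo (t (j-1)) (t j) ∩ F) + 2 * M := by
    intro j hj
    obtain ⟨hj1, hjk⟩ := Finset.mem_Icc.1 hj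
    exact pathLocTau_le_of_isCut ξ hinj hrad (hsk.t_mem _ (by omega)).1 (hsk.t_mem j hjk).2
      (hcut j hj1 hjk)
  have hsum : ∑ j ∈ Finset.Icc 1 k, volume.real (Ioo (t (j-1)) (t j) ∩ F) ≤
      volume.real (Ioo (t 0) (t k) ∩ F) := by
    have ht : Monotone fun i : Fin (k+1) => t i :=
      Fin.monotone_iff_le_succ.2 fun i => (hsk.t_mono i i.is_lt).le
    rw [sum_Icc_one_eq_sum_fin]
    simpa using sum_volume_real_Ioo_inter_le F ht
  have hfree : volume.real (Ioo (t 0) (t k) ∩ F) ≤ pathLocTau ξ n x :=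
    ENNReal.toReal_le_of_le_ofReal (pathLocTau_nonneg ξ n x)
      ((measure_mono inter_subset_right).trans (volume_iUnion_freeTimes_le ξ hinj))
  calc (∑ j ∈ Finset.Icc 1 k, pathLocTau ξ (m j) (y j)) - 2 * M * k
      ≤ (∑ j ∈ Finset.Icc 1 k, (volume.real (Ioo (t (j-1)) (t j) ∩ F) + 2 * M)) -
          2 * M * k :=
        sub_le_sub_right (Finset.sum_le_sum hcut_le) _
    _ = ∑ j ∈ Finset.Icc 1 k, volume.real (Ioo (t (j-1)) (t j) ∩ F) := by
        rw [Finset.sum_add_distrib, Finset.sum_const, Nat.card_Icc, nsmul_eq_mul]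
        push_cast
        ring
    _ ≤ pathLocTau ξ n x := hsum.trans hfree

/-- Let M > 0 and let ξ be a configuration all of whose radii are at most M.
Let ρ > 0, let π be a path starting at 0 whose ρ-skeleton construction produces the times
t_0 < … < t_k with k ≥ 1, and let γ^1, …, γ^k be the sub-paths obtained by cutting the
arc-length parametrized curve π at each t_i and discarding the part of π after time t_k.
Then τ̃(π;ξ) ≥ Σ_{j=1}^k τ̃(γ^j;ξ) − 2Mk. -/
theorem stmt3 {d : ℕ} (hd : 2 ≤ d) (M : ℝ) (hM : 0 < M)
    (ξ : Config d) (hrad : ∀ c, ξ.radius c ≤ M)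
    (ρ : ℝ) (hρ : 0 < ρ)
    (n : ℕ) (x : Fin (n+1) → Euc d) (hinj : Function.Injective x) (hx0 : x 0 = 0)
    (k : ℕ) (hk : 1 ≤ k) (a : ℕ → Euc d) (t : ℕ → ℝ)
    (hsk : IsSkeleton n x ρ k a t)
    (m : ℕ → ℕ) (y : (j : ℕ) → Fin (m j + 1) → Euc d)
    (hcut : ∀ j, 1 ≤ j → j ≤ k → IsCut n x (t (j-1)) (t j) (m j) (y j)) :
    pathLocTau ξ n x ≥ (∑ j ∈ Finset.Icc 1 k, pathLocTau ξ (m j) (y j)) - 2 * M * k :=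
  stmt3_general M ξ hrad ρ n x hinj k a t hsk m y hcut

end
end

section
/- Let n ≥ 1 and m ≥ 2 be integers and let ℛ ⊆ 𝒬(n,m). Then card(𝒜_0(ℛ)) ≤ card(𝒜_n(ℛ)). -/
/-!
Passing from `𝒜_k` to `𝒜_{k+1}` changes only the constraint at the position `j` with
`(j : ℕ) = k`: a tuple `R` with `j ∈ R a` asks for colour `1` there before and colour `a` after.
Fix the colours off `j`. If some admissible `R` avoids `j`, every colour at `j` is allowed at
both levels. Otherwise at most colour `1` is allowed at level `k`, and if it is, some `R` puts
`j` in some `R a`, unique by disjointness, so colour `a` is allowed at level `k + 1`. Hence each fibre of the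
restriction to the positions other than `j` grows, and `k ↦ card 𝒜_k` is monotone.
-/

open Function Finset

/-- `𝒜_k(ℛ)` for `ℛ ⊆ 𝒬(n,m)`: the set of colorings `c : {1,…,n} → {1,…,m}` (0-indexed
here, the paper's index `i ∈ {1,…,n}` corresponds to `i : Fin n` with `i+1 ≤ k` i.e.
`(i:ℕ) < k`, and the paper's color `1` corresponds to `(0 : Fin m)`, i.e. value `0`) for
which there exists `R ∈ ℛ` such that for all colors `a` and all `i ∈ R_a`, `c i = a` when
`i ≤ k` and `c i = 1` when `i > k`. -/
def Ak (n m : ℕ) (Rcal : Set (Fin m → Finset (Fin n))) (k : ℕ) : Set (Fin n → Fin m) :=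
  {c | ∃ R ∈ Rcal, ∀ a : Fin m, ∀ i ∈ R a, if (i : ℕ) < k then c i = a else ((c i) : ℕ) = 0}

theorem Set.ncard_le_ncard_of_ncard_update_le {ι α : Type*} [DecidableEq ι] [Finite ι]
    [Finite α] {A B : Set (ι → α)} (j : ι)
    (h : ∀ c, {x | update c j x ∈ A}.ncard ≤ {x | update c j x ∈ B}.ncard) :
    A.ncard ≤ B.ncard := by
  classical
  have := Fintype.ofFinite ι
  have := Fintype.ofFinite α
  let p : (ι → α) → ({i // i ≠ j} → α) := fun c i => c i
  have fiber (S : Set (ι → α)) (c : ι → α) :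
      #{c' ∈ S.toFinset | p c' = p c} = {x | update c j x ∈ S}.ncard := by
    rw [← Set.ncard_coe_finset, ← Set.ncard_image_of_injective _ (update_injective c j)]
    congr 1
    ext c'
    simp only [Finset.coe_filter, Set.mem_toFinset, Set.mem_image]
    constructor
    · rintro ⟨hc', hagree⟩
      have hc'_eq : update c j (c' j) = c' :=
        update_eq_iff.2 ⟨rfl, fun i hi => (congrFun hagree ⟨i, hi⟩).symm⟩
      exact ⟨c' j, show update c j (c' j) ∈ S by rwa [hc'_eq], hc'_eq⟩
    · rintro ⟨x, hx, rfl⟩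
      exact ⟨hx, funext fun i => update_of_ne i.2 x c⟩
  calc A.ncard = ∑ d ∈ Finset.univ.image p, #{c ∈ A.toFinset | p c = d} := by
        rw [Set.ncard_eq_toFinset_card']
        exact card_eq_sum_card_fiberwise fun c _ => by simp
    _ ≤ ∑ d ∈ Finset.univ.image p, #{c ∈ B.toFinset | p c = d} := by
        refine sum_le_sum fun d hd => ?_
        obtain ⟨c, -, rfl⟩ := Finset.mem_image.1 hd
        rw [fiber, fiber]
        exact h c
    _ = B.ncard := by
        rw [Set.ncard_eq_toFinset_card']
        exact (card_eq_sum_card_fiberwise fun c _ => by simp).symm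

theorem Set.ncard_exists_forall_mem_le_ncard_exists_forall_eq {ι α : Type*} [Finite α]
    {s : Set ι} {W : ι → Prop} {L : ι → Set α} {Z : Set α} (hZ : Z.Subsingleton)
    (hL : ∀ r ∈ s, (L r).Subsingleton) :
    {x | ∃ r ∈ s, W r ∧ ∀ a ∈ L r, x ∈ Z}.ncard ≤
      {x | ∃ r ∈ s, W r ∧ ∀ a ∈ L r, x = a}.ncard := by
  by_cases hfree : ∃ r ∈ s, W r ∧ L r = ∅
  · obtain ⟨r, hrs, hr, hLr⟩ := hfree
    have huniv : {x | ∃ r ∈ s, W r ∧ ∀ a ∈ L r, x = a} = Set.univ :=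
      Set.eq_univ_of_forall fun x => ⟨r, hrs, hr, by simp [hLr]⟩
    rw [huniv]
    exact Set.ncard_le_ncard (Set.subset_univ _)
  push Not at hfree
  rcases Set.eq_empty_or_nonempty {x | ∃ r ∈ s, W r ∧ ∀ a ∈ L r, x ∈ Z}
    with hS | ⟨x, r, hrs, hr, -⟩
  · simp [hS]
  obtain ⟨a, ha⟩ := hfree r hrs hr
  calc {x | ∃ r ∈ s, W r ∧ ∀ a ∈ L r, x ∈ Z}.ncard ≤ 1 := by
        refine Set.ncard_le_one_iff_subsingleton.2 (hZ.anti ?_)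
        rintro y ⟨r', hrs', hr', hy⟩
        obtain ⟨b, hb⟩ := hfree r' hrs' hr'
        exact hy b hb
    _ ≤ _ := Nat.one_le_iff_ne_zero.2 <| Set.ncard_ne_zero_of_mem
        (show a ∈ {x | ∃ r ∈ s, W r ∧ ∀ a ∈ L r, x = a} from
          ⟨r, hrs, hr, fun b hb => hL r hrs ha hb⟩)

variable {n m : ℕ} {Rcal : Set (Fin m → Finset (Fin n))}

theorem update_mem_Ak_iff (k : ℕ) (j : Fin n) (c : Fin n → Fin m) (x : Fin m) :
    update c j x ∈ Ak n m Rcal k ↔ ∃ R ∈ Rcal,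
      (∀ a, ∀ i ∈ R a, i ≠ j → if (i : ℕ) < k then c i = a else (c i : ℕ) = 0) ∧
      ∀ a, j ∈ R a → if (j : ℕ) < k then x = a else (x : ℕ) = 0 := by
  refine exists_congr fun R => and_congr_right fun _ => ?_
  constructor
  · intro h
    refine ⟨fun a i hi hij => ?_, fun a ha => ?_⟩
    · simpa [update_of_ne hij] using h a i hi
    · simpa using h a j ha
  · rintro ⟨hoff, hj⟩ a i hi
    obtain rfl | hij := eq_or_ne i j
    · simpa using hj a hi
    · simpa [update_of_ne hij] using hoff a i hi hij

theorem Ak_succ_of_le {k : ℕ} (hk : n ≤ k) : Ak n m Rcal (k + 1) = Ak n m Rcal k := by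
  have hi (i : Fin n) : (i : ℕ) < k := i.2.trans_le hk
  simp only [Ak, hi, Nat.lt_succ_of_lt, if_true]

theorem ncard_Ak_le_ncard_Ak_succ
    (hdisj : ∀ R ∈ Rcal, ∀ a b : Fin m, a ≠ b → Disjoint (R a) (R b)) {k : ℕ} (hk : k < n) :
    (Ak n m Rcal k).ncard ≤ (Ak n m Rcal (k + 1)).ncard := by
  set j : Fin n := ⟨k, hk⟩
  refine Set.ncard_le_ncard_of_ncard_update_le j fun c => ?_
  have hoff (R : Fin m → Finset (Fin n)) :
      (∀ a, ∀ i ∈ R a, i ≠ j → if (i : ℕ) < k + 1 then c i = a else (c i : ℕ) = 0) ↔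
        ∀ a, ∀ i ∈ R a, i ≠ j → if (i : ℕ) < k then c i = a else (c i : ℕ) = 0 := by
    refine forall₃_congr fun a i _ => forall_congr' fun hij => ?_
    have : (i : ℕ) ≠ k := fun h => hij (Fin.ext h)
    simp only [show (i : ℕ) < k + 1 ↔ (i : ℕ) < k by omega]
  have hj : (j : ℕ) = k := rfl
  simp only [update_mem_Ak_iff, hj, lt_irrefl, Nat.lt_succ_self, if_true, if_false,
    hoff]
  refine Set.ncard_exists_forall_mem_le_ncard_exists_forall_eq
    (L := fun R : Fin m → Finset (Fin n) => {a | j ∈ R a}) (Z := {x : Fin m | (x : ℕ) = 0})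
    (fun x hx y hy => Fin.ext (hx.trans hy.symm)) fun R hR a ha b hb => ?_
  by_contra hab
  exact Finset.disjoint_left.1 (hdisj R hR a b hab) ha hb

theorem monotone_ncard_Ak
    (hdisj : ∀ R ∈ Rcal, ∀ a b : Fin m, a ≠ b → Disjoint (R a) (R b)) :
    Monotone fun k => (Ak n m Rcal k).ncard := by
  refine monotone_nat_of_le_succ fun k => ?_
  obtain hk | hk := lt_or_ge k n
  · exact ncard_Ak_le_ncard_Ak_succ hdisj hk
  · rw [Ak_succ_of_le hk]

theorem stmt7_general (n m : ℕ)
    (Rcal : Set (Fin m → Finset (Fin n)))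
    (hdisj : ∀ R ∈ Rcal, ∀ a b : Fin m, a ≠ b → Disjoint (R a) (R b)) :
    (Ak n m Rcal 0).ncard ≤ (Ak n m Rcal n).ncard :=
  monotone_ncard_Ak hdisj (Nat.zero_le n)

/-- Let n ≥ 1 and m ≥ 2 be integers and let ℛ ⊆ 𝒬(n,m) (a set of m-tuples of
pairwise disjoint subsets of {1,…,n}). Then card(𝒜_0(ℛ)) ≤ card(𝒜_n(ℛ)). -/
theorem stmt7 (n m : ℕ) (hn : 1 ≤ n) (hm : 2 ≤ m)
    (Rcal : Set (Fin m → Finset (Fin n)))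
    (hdisj : ∀ R ∈ Rcal, ∀ a b : Fin m, a ≠ b → Disjoint (R a) (R b)) :
    (Ak n m Rcal 0).ncard ≤ (Ak n m Rcal n).ncard :=
  stmt7_general n m Rcal hdisj
end

section
/- Let n ≥ 1 and m ≥ 2 be integers and let ℛ ⊆ 𝒬(n,m). Then for every k ∈ {1,…,n}, card(𝒜_{k−1}(ℛ)) ≤ card(𝒜_k(ℛ)). -/
/-- Let n ≥ 1 and m ≥ 2 be integers and let ℛ ⊆ 𝒬(n,m). Then for every
k ∈ {1,…,n}, card(𝒜_{k−1}(ℛ)) ≤ card(𝒜_k(ℛ)). -/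
theorem stmt8 (n m : ℕ) (hn : 1 ≤ n) (hm : 2 ≤ m)
    (Rcal : Set (Fin m → Finset (Fin n)))
    (hdisj : ∀ R ∈ Rcal, ∀ a b : Fin m, a ≠ b → Disjoint (R a) (R b)) :
    ∀ k : ℕ, 1 ≤ k → k ≤ n → (Ak n m Rcal (k-1)).ncard ≤ (Ak n m Rcal k).ncard := by
  intro k hk1 hkn
  classical
  set A := Ak n m Rcal (k-1) with hA
  set B := Ak n m Rcal k with hB
  set j : Fin n := ⟨k-1, by omega⟩ with hjdef
  have hjval : (j : ℕ) = k - 1 := rfl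
  -- key lemma
  have key : ∀ c ∈ A, c ∉ B →
      (c j : ℕ) = 0 ∧ ∃ c', (c' ∈ B ∧ c' ∉ A) ∧ ∀ i : Fin n, i ≠ j → c' i = c i := by
    intro c hcA hcB
    obtain ⟨R, hRmem, hR⟩ := hcA
    -- there is a color a with j ∈ R a
    have hex : ∃ a : Fin m, j ∈ R a := by
      by_contra h
      push_neg at h
      exact hcB ⟨R, hRmem, by
        intro b i hi
        have hij : i ≠ j := fun e => h b (e ▸ hi)
        have hij' : (i : ℕ) ≠ k - 1 := fun e => hij (Fin.ext (e.trans hjval.symm))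
        have := hR b i hi
        split_ifs with hik
        · have : (i : ℕ) < k - 1 := by omega
          simpa [this] using hR b i hi
        · have : ¬ (i : ℕ) < k - 1 := by omega
          simpa [this] using hR b i hi⟩
    obtain ⟨a, hja⟩ := hex
    have hcj0 : (c j : ℕ) = 0 := by
      have := hR a j hja
      have : ¬ ((j : ℕ) < k - 1) := by omega
      simpa [this] using hR a j hja
    refine ⟨hcj0, ?_⟩
    set c' : Fin n → Fin m := Function.update c j a with hc'
    have hc'j : c' j = a := Function.update_self j a c
    have hc'ne : ∀ i : Fin n, i ≠ j → c' i = c i := fun i hij =>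
      Function.update_of_ne hij a c
    -- c' ∈ B
    have hc'B : c' ∈ B := by
      refine ⟨R, hRmem, ?_⟩
      intro b i hi
      by_cases hij : i = j
      · subst hij
        have hba : b = a := by
          by_contra hba
          exact Finset.disjoint_left.mp (hdisj R hRmem a b fun e => hba e.symm) hja hi
        have hlt : ((⟨k-1, by omega⟩ : Fin n) : ℕ) < k := by omega
        simp only [hjdef] at hc'j ⊢
        simp [hlt, hc'j, hba]
      · have hij' : (i : ℕ) ≠ k - 1 := fun e => hij (Fin.ext (e.trans hjval.symm))
        rw [hc'ne i hij]
        have := hR b i hi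
        split_ifs with hik
        · have : (i : ℕ) < k - 1 := by omega
          simpa [this] using hR b i hi
        · have : ¬ (i : ℕ) < k - 1 := by omega
          simpa [this] using hR b i hi
    -- a ≠ 0 in val
    have ha0 : (a : ℕ) ≠ 0 := by
      intro ha
      apply hcB
      have hceq : c' = c := by
        funext i
        by_cases hij : i = j
        · subst hij; rw [hc'j]; exact Fin.ext (ha.trans hcj0.symm)
        · exact hc'ne i hij
      rw [← hceq]; exact hc'B
    -- c' ∉ A
    have hc'A : c' ∉ A := by
      rintro ⟨R', hR'mem, hR'⟩
      by_cases hex' : ∃ b : Fin m, j ∈ R' b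
      · obtain ⟨b, hjb⟩ := hex'
        have hnotlt : ¬ ((j : ℕ) < k - 1) := by omega
        have := hR' b j hjb
        rw [if_neg hnotlt] at this
        rw [hc'j] at this
        exact ha0 this
      · push_neg at hex'
        apply hcB
        refine ⟨R', hR'mem, ?_⟩
        intro b i hi
        have hij : i ≠ j := fun e => hex' b (e ▸ hi)
        have hij' : (i : ℕ) ≠ k - 1 := fun e => hij (Fin.ext (e.trans hjval.symm))
        have h2 := hR' b i hi
        rw [hc'ne i hij] at h2
        split_ifs with hik
        · have : (i : ℕ) < k - 1 := by omega
          simpa [this] using h2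
        · have : ¬ (i : ℕ) < k - 1 := by omega
          simpa [this] using h2
    exact ⟨c', ⟨hc'B, hc'A⟩, hc'ne⟩
  -- define the injection
  let Φ : (Fin n → Fin m) → (Fin n → Fin m) := fun c =>
    if h : c ∈ A ∧ c ∉ B then Classical.choose (key c h.1 h.2).2 else c
  have hΦspec : ∀ c (h : c ∈ A ∧ c ∉ B),
      (Φ c ∈ B ∧ Φ c ∉ A) ∧ ∀ i : Fin n, i ≠ j → Φ c i = c i := by
    intro c h
    have := Classical.choose_spec (key c h.1 h.2).2
    simpa [Φ, dif_pos h] using this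
  have hmaps : ∀ c ∈ A, Φ c ∈ B := by
    intro c hc
    by_cases h : c ∈ A ∧ c ∉ B
    · exact (hΦspec c h).1.1
    · have hcB : c ∈ B := by tauto
      simpa [Φ, dif_neg h] using hcB
  have hinj : Set.InjOn Φ A := by
    intro c1 h1 c2 h2 heq
    by_cases hh1 : c1 ∈ A ∧ c1 ∉ B <;> by_cases hh2 : c2 ∈ A ∧ c2 ∉ B
    · funext i
      by_cases hij : i = j
      · subst hij
        have e1 : (c1 j : ℕ) = 0 := (key c1 hh1.1 hh1.2).1
        have e2 : (c2 j : ℕ) = 0 := (key c2 hh2.1 hh2.2).1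
        exact Fin.ext (e1.trans e2.symm)
      · have := (hΦspec c1 hh1).2 i hij
        have := (hΦspec c2 hh2).2 i hij
        calc c1 i = Φ c1 i := ((hΦspec c1 hh1).2 i hij).symm
          _ = Φ c2 i := by rw [heq]
          _ = c2 i := (hΦspec c2 hh2).2 i hij
    · exfalso
      have : Φ c2 = c2 := dif_neg hh2
      rw [this] at heq
      exact (hΦspec c1 hh1).1.2 (heq ▸ h2)
    · exfalso
      have : Φ c1 = c1 := dif_neg hh1
      rw [this] at heq
      exact (hΦspec c2 hh2).1.2 (heq ▸ h1)
    · have e1 : Φ c1 = c1 := dif_neg hh1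
      have e2 : Φ c2 = c2 := dif_neg hh2
      rw [e1, e2] at heq; exact heq
  exact Set.ncard_le_ncard_of_injOn Φ hmaps hinj (Set.toFinite B)
end

section
/- Let d ≥ 2 be an integer, let η > 0 and λ ≥ 0, and let ℛ be an admissible map with ν^ℛ((0,∞)) ≤ λ. Then, with C = ∫_0^∞ min(λ, s^{−(d+η)})^{1/d} ds (a finite constant depending only on d, λ, η), one has ∫_0^∞ ν^ℛ([r,∞))^{1/d} dr ≤ C (∫_{(0,∞)} ℛ(u)^{d+η} du)^{1/(d+η)}. -/
/-!
By Markov's inequality and the mass bound, `ν([r, ∞)) ≤ min (λ, r^{-p} I)` with `p = d + η` and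
`I = ∫ ℛ^p`. Substituting `r = I^{1/p} s` turns the integral of `min (λ, r^{-p} I)^{1/d}` into
`I^{1/p} C`, and `C` is finite because its integrand is bounded near `0` and decays like
`s^{-p/d}` with `p/d > 1` at infinity.
-/

open MeasureTheory Set
open scoped ENNReal

theorem lintegral_comp_mul_left_Ioi (g : ℝ → ℝ≥0∞) (a : ℝ) {b : ℝ} (hb : 0 < b) :
    ∫⁻ x in Ioi a, g (b * x) = ENNReal.ofReal b⁻¹ * ∫⁻ x in Ioi (b * a), g x := by
  have hpre : (b * ·) ⁻¹' Ioi (b * a) = Ioi a := by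
    rw [preimage_const_mul_Ioi₀ _ hb, mul_div_cancel_left₀ _ hb.ne']
  rw [← smul_eq_mul, ← lintegral_smul_measure, ← Measure.restrict_smul,
    ← abs_of_pos (inv_pos.2 hb), ← Real.map_volume_mul_left hb.ne',
    ← MeasurableEquiv.coe_mulLeft₀ hb.ne',
    MeasurableEquiv.restrict_map, lintegral_map_equiv, MeasurableEquiv.coe_mulLeft₀, hpre]

theorem meas_le_rpow_neg_mul_lintegral_rpow {α : Type*} [MeasurableSpace α] {μ : Measure α}
    {f : α → ℝ} (hf : AEMeasurable f μ) {p r : ℝ} (hp : 0 < p) (hr : 0 < r) :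
    μ {x | r ≤ f x} ≤ ENNReal.ofReal r ^ (-p) * ∫⁻ x, ENNReal.ofReal (f x) ^ p ∂μ := by
  have hr_ne_zero : ENNReal.ofReal r ^ p ≠ 0 := by simp [hr]
  have hr_ne_top : ENNReal.ofReal r ^ p ≠ ⊤ := by simp [hp.le]
  have hlevel : {x | r ≤ f x} = {x | ENNReal.ofReal r ^ p ≤ ENNReal.ofReal (f x) ^ p} := by
    ext x
    simp [ENNReal.rpow_le_rpow_iff hp, ENNReal.ofReal_le_ofReal_iff', hr.not_ge]
  calc μ {x | r ≤ f x}
      ≤ (∫⁻ x, ENNReal.ofReal (f x) ^ p ∂μ) / ENNReal.ofReal r ^ p :=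
        hlevel ▸ meas_ge_le_lintegral_div (by fun_prop) hr_ne_zero hr_ne_top
    _ = ENNReal.ofReal r ^ (-p) * ∫⁻ x, ENNReal.ofReal (f x) ^ p ∂μ := by
        rw [ENNReal.div_eq_inv_mul, ENNReal.rpow_neg]

theorem lintegral_Ioi_min_rpow_neg_lt_top {L : ℝ≥0∞} (hL : L ≠ ⊤) {p q : ℝ} (hq : 0 < q)
    (hpq : 1 < p * q) : ∫⁻ s in Ioi 0, min L (ENNReal.ofReal s ^ (-p)) ^ q < ⊤ := by
  rw [← Ioc_union_Ioi_eq_Ioi zero_le_one, lintegral_union measurableSet_Ioi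
    (Ioc_disjoint_Ioi le_rfl), ENNReal.add_lt_top]
  constructor
  · calc ∫⁻ s in Ioc 0 1, min L (ENNReal.ofReal s ^ (-p)) ^ q
        ≤ ∫⁻ _ in Ioc (0:ℝ) 1, L ^ q :=
          lintegral_mono fun s => ENNReal.rpow_le_rpow (min_le_left _ _) hq.le
      _ < ⊤ := by simpa using ENNReal.rpow_lt_top_of_nonneg hq.le hL
  · calc ∫⁻ s in Ioi 1, min L (ENNReal.ofReal s ^ (-p)) ^ q
        ≤ ∫⁻ s in Ioi 1, ENNReal.ofReal (s ^ (-p * q)) := by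
          refine setLIntegral_mono' measurableSet_Ioi fun s hs => ?_
          rw [← ENNReal.ofReal_rpow_of_pos (zero_lt_one.trans hs), ENNReal.rpow_mul]
          exact ENNReal.rpow_le_rpow (min_le_right _ _) hq.le
      _ < ⊤ := (integrableOn_Ioi_rpow_of_lt (by linarith) zero_lt_one).lintegral_lt_top

theorem lintegral_Ioi_min_rpow_neg_mul_of_ne_zero_of_ne_top (L : ℝ≥0∞) {I : ℝ≥0∞} (hI₀ : I ≠ 0)
    (hI : I ≠ ⊤) {p : ℝ} (hp : 0 < p) (q : ℝ) :
    ∫⁻ r in Ioi 0, min L (ENNReal.ofReal r ^ (-p) * I) ^ q =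
      I ^ (1 / p) * ∫⁻ s in Ioi 0, min L (ENNReal.ofReal s ^ (-p)) ^ q := by
  obtain ⟨m, hm, rfl⟩ : ∃ m : ℝ, 0 < m ∧ I = ENNReal.ofReal m ^ p := by
    have hroot_ne_zero : I ^ (1 / p) ≠ 0 := by simp [hI₀, hI]
    have hroot_ne_top : I ^ (1 / p) ≠ ⊤ := by simp [hI₀, hI]
    refine ⟨_, ENNReal.toReal_pos hroot_ne_zero hroot_ne_top, ?_⟩
    rw [ENNReal.ofReal_toReal hroot_ne_top, ← ENNReal.rpow_mul, one_div_mul_cancel hp.ne',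
      ENNReal.rpow_one]
  have hscale : ∀ s ∈ Ioi (0:ℝ),
      ENNReal.ofReal (m * s) ^ (-p) * ENNReal.ofReal m ^ p = ENNReal.ofReal s ^ (-p) := by
    intro s hs
    rw [ENNReal.ofReal_mul hm.le, ENNReal.mul_rpow_of_ne_zero (by simpa using hm)
      (by simpa using hs), mul_right_comm, ← ENNReal.rpow_add _ _ (by simpa using hm) (by simp),
      neg_add_cancel, ENNReal.rpow_zero, one_mul]
  have hsubst := lintegral_comp_mul_left_Ioi
    (fun r => min L (ENNReal.ofReal r ^ (-p) * ENNReal.ofReal m ^ p) ^ q) 0 hm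
  rw [mul_zero, setLIntegral_congr_fun measurableSet_Ioi
    fun s hs => congrArg (fun t => min L t ^ q) (hscale s hs)] at hsubst
  rw [← ENNReal.rpow_mul, mul_one_div_cancel hp.ne', ENNReal.rpow_one, hsubst, ← mul_assoc,
    ← ENNReal.ofReal_mul hm.le, mul_inv_cancel₀ hm.ne', ENNReal.ofReal_one, one_mul]

theorem lintegral_Ioi_min_rpow_neg_mul (L I : ℝ≥0∞) {p q : ℝ} (hp : 0 < p) (hq : 0 < q) :
    ∫⁻ r in Ioi 0, min L (ENNReal.ofReal r ^ (-p) * I) ^ q =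
      I ^ (1 / p) * ∫⁻ s in Ioi 0, min L (ENNReal.ofReal s ^ (-p)) ^ q := by
  rcases eq_or_ne I 0 with rfl | hI₀
  · simp [hp, hq]
  rcases ne_or_eq I ⊤ with hI | rfl
  · exact lintegral_Ioi_min_rpow_neg_mul_of_ne_zero_of_ne_top L hI₀ hI hp q
  rcases eq_or_ne L 0 with rfl | hL
  · simp [hq]
  have hpos (s : ℝ) : ENNReal.ofReal s ^ (-p) ≠ 0 := by simp [ENNReal.rpow_eq_zero_iff, hp.le]
  have hC : ∫⁻ s in Ioi 0, min L (ENNReal.ofReal s ^ (-p)) ^ q ≠ 0 := by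
    refine (setLIntegral_pos_iff (by fun_prop)).2 ?_ |>.ne'
    rw [inter_eq_right.2 fun s hs => ?_]
    · simp
    · simp [ENNReal.rpow_eq_zero_iff, hL, hpos s, hq.not_gt]
  rw [setLIntegral_congr_fun measurableSet_Ioi fun s _ => by
    rw [ENNReal.mul_top (hpos s), min_top_right]]
  simp [hp, hC, ENNReal.mul_top, hL, hq.not_gt]

theorem stmt9_general (d : ℕ) (hd : 2 ≤ d) (η lam : ℝ) (hη : 0 < η)
    (R : ℝ → ℝ) (hmeas : Measurable R)
    (hmass : volume {u : ℝ | u ∈ Ioi (0:ℝ) ∧ 0 < R u} ≤ ENNReal.ofReal lam) :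
    (∫⁻ s in Ioi (0:ℝ),
        (min (ENNReal.ofReal lam) (ENNReal.ofReal s ^ (-((d:ℝ) + η)))) ^ (1 / (d:ℝ))) < ⊤ ∧
    (∫⁻ r in Ioi (0:ℝ), (volume {u : ℝ | u ∈ Ioi (0:ℝ) ∧ r ≤ R u}) ^ (1 / (d:ℝ))) ≤
      (∫⁻ s in Ioi (0:ℝ),
        (min (ENNReal.ofReal lam) (ENNReal.ofReal s ^ (-((d:ℝ) + η)))) ^ (1 / (d:ℝ))) *
      (∫⁻ u in Ioi (0:ℝ), ENNReal.ofReal (R u) ^ ((d:ℝ) + η)) ^ (1 / ((d:ℝ) + η)) := by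
  have hd₀ : (0:ℝ) < d := Nat.cast_pos.2 (by omega)
  have hp : 0 < (d:ℝ) + η := by positivity
  refine ⟨lintegral_Ioi_min_rpow_neg_lt_top ENNReal.ofReal_ne_top (by positivity) ?_, ?_⟩
  · rw [mul_one_div, lt_div_iff₀ hd₀]
    linarith
  set I := ∫⁻ u in Ioi (0:ℝ), ENNReal.ofReal (R u) ^ ((d:ℝ) + η)
  have hdistrib : ∀ r ∈ Ioi (0:ℝ), volume {u : ℝ | u ∈ Ioi (0:ℝ) ∧ r ≤ R u} ≤
      min (ENNReal.ofReal lam) (ENNReal.ofReal r ^ (-((d:ℝ) + η)) * I) := by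
    intro r hr
    refine le_min ((measure_mono ?_).trans hmass) ?_
    · exact fun u hu => ⟨hu.1, lt_of_lt_of_le hr hu.2⟩
    · have hrestrict : volume {u : ℝ | u ∈ Ioi (0:ℝ) ∧ r ≤ R u} =
          volume.restrict (Ioi 0) {u | r ≤ R u} := by
        rw [Measure.restrict_apply' measurableSet_Ioi, inter_comm]
        rfl
      rw [hrestrict]
      exact meas_le_rpow_neg_mul_lintegral_rpow hmeas.aemeasurable hp hr
  calc _ ≤ ∫⁻ r in Ioi (0:ℝ),
          min (ENNReal.ofReal lam) (ENNReal.ofReal r ^ (-((d:ℝ) + η)) * I) ^ (1 / (d:ℝ)) :=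
        setLIntegral_mono' measurableSet_Ioi fun r hr =>
          ENNReal.rpow_le_rpow (hdistrib r hr) (by positivity)
    _ = _ := by rw [lintegral_Ioi_min_rpow_neg_mul _ _ hp (by positivity), mul_comm]

/-- Let d ≥ 2, η > 0, λ ≥ 0, and let ℛ be an admissible map (measurable,
nonnegative, vanishing outside a set of finite Lebesgue measure) with ν^ℛ((0,∞)) ≤ λ.
Then, with C = ∫_0^∞ min(λ, s^{−(d+η)})^{1/d} ds (a finite constant), one has
∫_0^∞ ν^ℛ([r,∞))^{1/d} dr ≤ C (∫_{(0,∞)} ℛ(u)^{d+η} du)^{1/(d+η)}.  Here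
ν^ℛ([r,∞)) = Leb{u > 0 : ℛ(u) ≥ r}. -/
theorem stmt9 (d : ℕ) (hd : 2 ≤ d) (η lam : ℝ) (hη : 0 < η) (hlam : 0 ≤ lam)
    (R : ℝ → ℝ) (hmeas : Measurable R) (hnonneg : ∀ u, 0 ≤ R u)
    (hvanish : volume {u : ℝ | u ∈ Ioi (0:ℝ) ∧ R u ≠ 0} < ⊤)
    (hmass : volume {u : ℝ | u ∈ Ioi (0:ℝ) ∧ 0 < R u} ≤ ENNReal.ofReal lam) :
    (∫⁻ s in Ioi (0:ℝ),
        (min (ENNReal.ofReal lam) (ENNReal.ofReal s ^ (-((d:ℝ) + η)))) ^ (1 / (d:ℝ))) < ⊤ ∧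
    (∫⁻ r in Ioi (0:ℝ), (volume {u : ℝ | u ∈ Ioi (0:ℝ) ∧ r ≤ R u}) ^ (1 / (d:ℝ))) ≤
      (∫⁻ s in Ioi (0:ℝ),
        (min (ENNReal.ofReal lam) (ENNReal.ofReal s ^ (-((d:ℝ) + η)))) ^ (1 / (d:ℝ))) *
      (∫⁻ u in Ioi (0:ℝ), ENNReal.ofReal (R u) ^ ((d:ℝ) + η)) ^ (1 / ((d:ℝ) + η)) :=
  stmt9_general d hd η lam hη R hmeas hmass
end

section
/- Let χ be a locally finite subset of ℝ^d and let (r^-(c))_{c∈χ}, (r^+(c))_{c∈χ} be families of nonnegative reals with r^-(c) ≤ r^+(c) for all c; extend r^- and r^+ by 0 outside χ and set ξ^- = {(c,r^-(c)) : c ∈ χ, r^-(c) > 0}, ξ^+ = {(c,r^+(c)) : c ∈ χ, r^+(c) > 0}. Let s > 0 and suppose π^+ = (x_0,…,x_n) is a ξ^+-good path from 0 to the sphere S(0,s) with τ(π^+;ξ^+) = T(0,S(0,s);ξ^+) (a ξ^+-good geodesic). Then T(0,S(0,s);ξ^-) ≤ T(0,S(0,s);ξ^+) + 2 Σ_{i=1}^{n−1}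 (r^+(x_i) − r^-(x_i)). -/
open MeasureTheory Set

noncomputable section

variable {d : ℕ}

/-!
Compare travel times along `π⁺` itself. Since `π⁺` is `ξ⁺`-good, on each of its segments
`Σ(ξ⁺)` is covered by the balls `B(x_i, r⁺(x_i))` at the two endpoints, while `Σ(ξ⁻)` still
contains the smaller balls `B(x_i, r⁻(x_i))`; so the segment costs at most
`r⁺ - r⁻` more under `ξ⁻` at each end. Summing over segments charges every interior vertex
twice, and `T(0, S(0,s); ξ⁻) ≤ τ(π⁺; ξ⁻)`.
-/

section Segment

variable {E : Type*} [NormedAddCommGroup E] [NormedSpace ℝ E]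

lemma dist_add_smul_sub_left (a b : E) {t : ℝ} (ht : 0 ≤ t) :
    dist (a + t • (b - a)) a = t * ‖b - a‖ := by
  rw [dist_eq_norm, add_sub_cancel_left, norm_smul, Real.norm_of_nonneg ht]

lemma dist_add_smul_sub_right (a b : E) {t : ℝ} (ht : t ≤ 1) :
    dist (a + t • (b - a)) b = (1 - t) * ‖b - a‖ := by
  have : a + t • (b - a) - b = -((1 - t) • (b - a)) := by module
  rw [dist_eq_norm, this, norm_neg, norm_smul, Real.norm_of_nonneg (by linarith)]

lemma segParam_subset {Sm Sp : Set E} {a b : E} {ra rb rl rr : ℝ} (hab : a ≠ b)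
    (hp : segment ℝ a b ∩ Sp ⊆ Metric.ball a rl ∪ Metric.ball b rr)
    (ha : Metric.ball a ra ⊆ Sm) (hb : Metric.ball b rb ⊆ Sm) :
    {t : ℝ | t ∈ Icc (0:ℝ) 1 ∧ a + t • (b - a) ∉ Sm} ⊆
      {t : ℝ | t ∈ Icc (0:ℝ) 1 ∧ a + t • (b - a) ∉ Sp} ∪
        (Ico (ra / ‖b - a‖) (rl / ‖b - a‖) ∪ Ioc (1 - rr / ‖b - a‖) (1 - rb / ‖b - a‖)) := by
  have hL : 0 < ‖b - a‖ := norm_pos_iff.mpr (sub_ne_zero.mpr hab.symm)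
  rintro t ⟨ht, hm⟩
  by_cases hSp : a + t • (b - a) ∈ Sp
  swap
  · exact Or.inl ⟨ht, hSp⟩
  have hseg : a + t • (b - a) ∈ segment ℝ a b := by
    rw [segment_eq_image']; exact ⟨t, ht, rfl⟩
  have hda := dist_add_smul_sub_left a b ht.1
  have hdb := dist_add_smul_sub_right a b ht.2
  right
  rcases hp ⟨hseg, hSp⟩ with hl | hr
  · have hla : ra ≤ t * ‖b - a‖ := by
      rw [← hda]; exact not_lt.mp fun h => hm (ha h)
    rw [Metric.mem_ball, hda] at hl
    left
    constructor
    · rwa [div_le_iff₀ hL]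
    · rwa [lt_div_iff₀ hL]
  · have hrb : rb ≤ (1 - t) * ‖b - a‖ := by
      rw [← hdb]; exact not_lt.mp fun h => hm (hb h)
    rw [Metric.mem_ball, hdb] at hr
    right
    constructor
    · rw [sub_lt_comm, lt_div_iff₀ hL]; linarith
    · rw [le_sub_comm, div_le_iff₀ hL]; linarith

end Segment

lemma measureReal_le_of_subset_union_Ico_Ioc {A B : Set ℝ} (hB : volume B ≠ ⊤)
    {u v w z : ℝ} (huv : u ≤ v) (hwz : w ≤ z) (h : A ⊆ B ∪ (Ico u v ∪ Ioc w z)) :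
    volume.real A ≤ volume.real B + ((v - u) + (z - w)) :=
  calc volume.real A ≤ volume.real (B ∪ (Ico u v ∪ Ioc w z)) :=
        measureReal_mono h (measure_union_ne_top hB
          (measure_union_ne_top measure_Ico_lt_top.ne measure_Ioc_lt_top.ne))
    _ ≤ volume.real B + (volume.real (Ico u v) + volume.real (Ioc w z)) :=
        (measureReal_union_le _ _).trans (add_le_add le_rfl (measureReal_union_le _ _))
    _ = volume.real B + ((v - u) + (z - w)) := by
        rw [Real.volume_real_Ico_of_le huv, Real.volume_real_Ioc_of_le hwz]

lemma segTau_nonneg (ξ : Config d) (a b : Euc d) : 0 ≤ segTau ξ a b :=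
  mul_nonneg (norm_nonneg _) ENNReal.toReal_nonneg

lemma segTau_le_segTau_add {ξm ξp : Config d} {a b : Euc d} {ra rb rl rr : ℝ}
    (hra : ra ≤ rl) (hrb : rb ≤ rr)
    (hp : segment ℝ a b ∩ ξp.sigma ⊆ Metric.ball a rl ∪ Metric.ball b rr)
    (ha : Metric.ball a ra ⊆ ξm.sigma) (hb : Metric.ball b rb ⊆ ξm.sigma) :
    segTau ξm a b ≤ segTau ξp a b + ((rl - ra) + (rr - rb)) := by
  rcases eq_or_ne a b with rfl | hab
  · simp only [segTau, sub_self, norm_zero, zero_mul, zero_add]; linarith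
  have hL : 0 < ‖b - a‖ := norm_pos_iff.mpr (sub_ne_zero.mpr hab.symm)
  have hfin : volume {t : ℝ | t ∈ Icc (0:ℝ) 1 ∧ a + t • (b - a) ∉ ξp.sigma} ≠ ⊤ :=
    ((measure_mono fun _ ht => ht.1).trans_lt measure_Icc_lt_top).ne
  have hvol := measureReal_le_of_subset_union_Ico_Ioc hfin
    (div_le_div_of_nonneg_right hra hL.le)
    (sub_le_sub_left (div_le_div_of_nonneg_right hrb hL.le) 1)
    (segParam_subset hab hp ha hb)
  calc segTau ξm a b
      ≤ ‖b - a‖ * (volume.real {t : ℝ | t ∈ Icc (0:ℝ) 1 ∧ a + t • (b - a) ∉ ξp.sigma} +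
          ((rl / ‖b - a‖ - ra / ‖b - a‖) + ((1 - rb / ‖b - a‖) - (1 - rr / ‖b - a‖)))) :=
        mul_le_mul_of_nonneg_left hvol hL.le
    _ = segTau ξp a b + ((rl - ra) + (rr - rb)) := by
        rw [segTau, measureReal_def]; field_simp; ring

lemma ball_radius_subset_sigma (ξ : Config d) (c : Euc d) :
    Metric.ball c (ξ.radius c) ⊆ ξ.sigma :=
  subset_iUnion (fun c => Metric.ball c (ξ.radius c)) c

section Path

variable {n : ℕ} (x : Fin (n+1) → Euc d)

lemma ball_leftR_subset_sigma (ξ : Config d) (i : Fin n) :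
    Metric.ball (x i.castSucc) (leftR ξ x i) ⊆ ξ.sigma := by
  unfold leftR; split_ifs
  · simp
  · exact ball_radius_subset_sigma ξ _

lemma ball_rightR_subset_sigma (ξ : Config d) (i : Fin n) :
    Metric.ball (x i.succ) (rightR ξ x i) ⊆ ξ.sigma := by
  unfold rightR; split_ifs
  · simp
  · exact ball_radius_subset_sigma ξ _

lemma sum_leftR (ξ : Config d) :
    ∑ i, leftR ξ x i =
      ∑ j ∈ Finset.univ.filter (fun j : Fin (n+1) => 0 < (j : ℕ) ∧ (j : ℕ) < n),
        ξ.radius (x j) := by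
  rw [Finset.sum_filter, Fin.sum_univ_castSucc]
  simp only [Fin.val_last, lt_irrefl, and_false, if_false, add_zero, Fin.val_castSucc]
  refine Finset.sum_congr rfl fun i _ => ?_
  unfold leftR
  split_ifs <;> first | rfl | omega

lemma sum_rightR (ξ : Config d) :
    ∑ i, rightR ξ x i =
      ∑ j ∈ Finset.univ.filter (fun j : Fin (n+1) => 0 < (j : ℕ) ∧ (j : ℕ) < n),
        ξ.radius (x j) := by
  rw [Finset.sum_filter, Fin.sum_univ_succ]
  simp only [Fin.val_zero, lt_irrefl, false_and, if_false, zero_add, Fin.val_succ]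
  refine Finset.sum_congr rfl fun i _ => ?_
  unfold rightR
  split_ifs <;> first | rfl | omega

lemma pathTau_le_of_isGood {ξm ξp : Config d} (hle : ∀ c, ξm.radius c ≤ ξp.radius c)
    (hgood : IsGood ξp n x) :
    pathTau ξm n x ≤ pathTau ξp n x +
      2 * ∑ j ∈ Finset.univ.filter (fun j : Fin (n+1) => 0 < (j : ℕ) ∧ (j : ℕ) < n),
        (ξp.radius (x j) - ξm.radius (x j)) := by
  have hseg : ∀ i : Fin n, segTau ξm (x i.castSucc) (x i.succ) ≤
      segTau ξp (x i.castSucc) (x i.succ) +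
        ((leftR ξp x i - leftR ξm x i) + (rightR ξp x i - rightR ξm x i)) := fun i =>
    segTau_le_segTau_add (by unfold leftR; split_ifs <;> simp [hle])
      (by unfold rightR; split_ifs <;> simp [hle]) ((hgood.2 i).ge.trans inter_subset_right)
      (ball_leftR_subset_sigma x ξm i) (ball_rightR_subset_sigma x ξm i)
  calc pathTau ξm n x ≤ ∑ i : Fin n, (segTau ξp (x i.castSucc) (x i.succ) +
        ((leftR ξp x i - leftR ξm x i) + (rightR ξp x i - rightR ξm x i))) :=
        Finset.sum_le_sum fun i _ => hseg i
    _ = _ := by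
        simp only [Finset.sum_add_distrib, Finset.sum_sub_distrib, sum_leftR, sum_rightR,
          pathTau]
        ring

end Path

lemma Ttime_le_pathTau (ξ : Config d) {A B : Set (Euc d)} {n : ℕ} {x : Fin (n+1) → Euc d}
    (hinj : Function.Injective x) (h0 : x 0 ∈ A) (hn : x (Fin.last n) ∈ B) :
    Ttime ξ A B ≤ pathTau ξ n x :=
  csInf_le
    ⟨0, by
      rintro v ⟨m, y, -, -, -, rfl⟩
      exact Finset.sum_nonneg fun i _ => segTau_nonneg ξ _ _⟩
    ⟨n, x, hinj, h0, hn, rfl⟩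

theorem stmt16_general {d : ℕ} (ξm ξp : Config d)
    (hle : ∀ c, ξm.radius c ≤ ξp.radius c)
    (s : ℝ)
    (n : ℕ) (x : Fin (n+1) → Euc d) (hinj : Function.Injective x)
    (hx0 : x 0 = 0) (hxn : x (Fin.last n) ∈ Metric.sphere (0 : Euc d) s)
    (hgood : IsGood ξp n x)
    (hgeo : pathTau ξp n x = Ttime ξp {(0 : Euc d)} (Metric.sphere (0 : Euc d) s)) :
    Ttime ξm {(0 : Euc d)} (Metric.sphere (0 : Euc d) s) ≤
      Ttime ξp {(0 : Euc d)} (Metric.sphere (0 : Euc d) s) +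
        2 * ∑ i ∈ Finset.univ.filter (fun i : Fin (n+1) => 0 < (i : ℕ) ∧ (i : ℕ) < n),
          (ξp.radius (x i) - ξm.radius (x i)) := by
  rw [← hgeo]
  exact (Ttime_le_pathTau ξm hinj (by simp [hx0]) hxn).trans (pathTau_le_of_isGood x hle hgood)

/-- comparison of travel times to the sphere S(0,s) for two coupled
configurations ξ^- ≤ ξ^+, along a ξ^+-good geodesic π^+ from 0 to S(0,s). -/
theorem stmt16 {d : ℕ} (hd : 2 ≤ d) (ξm ξp : Config d)
    (hle : ∀ c, ξm.radius c ≤ ξp.radius c)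
    (s : ℝ) (hs : 0 < s)
    (n : ℕ) (x : Fin (n+1) → Euc d) (hinj : Function.Injective x)
    (hx0 : x 0 = 0) (hxn : x (Fin.last n) ∈ Metric.sphere (0 : Euc d) s)
    (hgood : IsGood ξp n x)
    (hgeo : pathTau ξp n x = Ttime ξp {(0 : Euc d)} (Metric.sphere (0 : Euc d) s)) :
    Ttime ξm {(0 : Euc d)} (Metric.sphere (0 : Euc d) s) ≤
      Ttime ξp {(0 : Euc d)} (Metric.sphere (0 : Euc d) s) +
        2 * ∑ i ∈ Finset.univ.filter (fun i : Fin (n+1) => 0 < (i : ℕ) ∧ (i : ℕ) < n),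
          (ξp.radius (x i) - ξm.radius (x i)) :=
  stmt16_general ξm ξp hle s n x hinj hx0 hxn hgood hgeo

end
end

section
/- Let (ν_n)_{n∈ℕ} be probability measures on (0,∞) converging weakly to a probability measure ν_∞ on (0,∞), and let (λ_n)_{n∈ℕ} be positive reals converging to λ_∞ > 0. Then the set of u > 0 for which ℛ_{λ_n ν_n}(u) does not converge to ℛ_{λ_∞ ν_∞}(u) is at most countable; in particular ℛ_{λ_n ν_n} converges to ℛ_{λ_∞ ν_∞} Lebesgue-almost everywhere on (0,∞). -/
/-!
`ℛ_μ` is a generalized inverse of the tail `r ↦ μ([r,∞))`: for `u, r > 0`, `r < ℛ_μ(u)` forces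
`u ≤ μ([r,∞))`, which in turn forces `r ≤ ℛ_μ(u)`. Weak convergence gives convergence of the tails
at every `r` outside the countable set of atoms of `ν_∞`, so at any `u` where `ℛ_{λ_∞ ν_∞}` is
right-continuous, trapping `ℛ_{λ_∞ ν_∞}(u)` between nearby non-atoms gives convergence. Since
`ℛ_{λ_∞ ν_∞}` is antitone on `(0,∞)`, it is discontinuous at only countably many points.
-/

open MeasureTheory Set Filter

/-- `ℛ_ν(u) = sup{r > 0 : ν([r,∞)) ≥ u}`, with the convention `sup ∅ = 0` (built into
`Real.sSup`), for a (finite) measure `ν` on `(0,∞)` encoded as a measure on ℝ giving no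
mass to `(-∞,0]`. -/
noncomputable def Rnu (μ : MeasureTheory.Measure ℝ) (u : ℝ) : ℝ :=
  sSup {r : ℝ | 0 < r ∧ u ≤ (μ (Set.Ici r)).toReal}

open Topology

theorem tendsto_measure_Ici_atTop_zero {α : Type*} [LinearOrder α] [NoMaxOrder α]
    [Nonempty α] [TopologicalSpace α] [ClosedIciTopology α] [MeasurableSpace α]
    [OpensMeasurableSpace α]
    [(atTop : Filter α).IsCountablyGenerated] (μ : Measure α) [IsFiniteMeasure μ] :
    Tendsto (fun r => μ (Ici r)) atTop (𝓝 0) := by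
  have hempty : ⋂ r : α, Ici r = ∅ :=
    eq_empty_of_forall_notMem fun x hx => by
      obtain ⟨y, hxy⟩ := exists_gt x
      exact hxy.not_ge (mem_iInter.1 hx y)
  simpa [hempty, Function.comp_def] using tendsto_measure_iInter_atTop (μ := μ)
    (fun r => measurableSet_Ici.nullMeasurableSet) (fun _ _ h => Ici_subset_Ici.2 h)
    ⟨Classical.arbitrary α, measure_ne_top μ _⟩

theorem MeasureTheory.Measure.countable_setOf_measure_singleton_pos {α : Type*}
    [MeasurableSpace α] [MeasurableSingletonClass α] (μ : Measure α) [IsFiniteMeasure μ] :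
    {x : α | 0 < μ {x}}.Countable :=
  Measure.countable_meas_pos_of_disjoint_of_meas_iUnion_ne_top μ
    (fun _ => measurableSet_singleton _) (fun _ _ h => disjoint_singleton.2 h) (measure_ne_top μ _)

section Rnu

variable {μ : Measure ℝ} {u r : ℝ}

theorem Rnu_nonneg (μ : Measure ℝ) (u : ℝ) : 0 ≤ Rnu μ u :=
  Real.sSup_nonneg fun _ hr => hr.1.le

theorem bddAbove_setOf_le_measure_Ici [IsFiniteMeasure μ] (hu : 0 < u) :
    BddAbove {r : ℝ | 0 < r ∧ u ≤ (μ (Ici r)).toReal} := by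
  have hlim : Tendsto (fun r => (μ (Ici r)).toReal) atTop (𝓝 0) := by
    simpa [Function.comp_def] using
      (ENNReal.tendsto_toReal ENNReal.zero_ne_top).comp (tendsto_measure_Ici_atTop_zero μ)
  obtain ⟨R, hR⟩ := (hlim.eventually_lt_const hu).exists_forall_of_atTop
  refine ⟨R, fun r hr => le_of_not_gt fun hRr => ?_⟩
  exact (hR r hRr.le).not_ge hr.2

theorem le_Rnu_of_le_measure_Ici [IsFiniteMeasure μ] (hu : 0 < u) (hr : 0 < r)
    (h : u ≤ (μ (Ici r)).toReal) : r ≤ Rnu μ u :=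
  le_csSup (bddAbove_setOf_le_measure_Ici hu) ⟨hr, h⟩

theorem le_measure_Ici_of_lt_Rnu [IsFiniteMeasure μ] (hr : 0 < r) (h : r < Rnu μ u) :
    u ≤ (μ (Ici r)).toReal := by
  have hne : {r : ℝ | 0 < r ∧ u ≤ (μ (Ici r)).toReal}.Nonempty :=
    nonempty_iff_ne_empty.2 fun hempty => by
      rw [Rnu, hempty, Real.sSup_empty] at h
      exact hr.not_gt h
  obtain ⟨s, ⟨-, hs⟩, hrs⟩ := exists_lt_of_lt_csSup hne h
  exact hs.trans
    (ENNReal.toReal_mono (measure_ne_top μ _) (measure_mono (Ici_subset_Ici.2 hrs.le)))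

theorem antitoneOn_Rnu [IsFiniteMeasure μ] : AntitoneOn (Rnu μ) (Ioi 0) := by
  intro u hu u' _ huu'
  refine le_of_forall_lt_imp_le_of_dense fun r hr => ?_
  rcases le_or_gt r 0 with hr0 | hr0
  · exact hr0.trans (Rnu_nonneg μ u)
  · exact le_Rnu_of_le_measure_Ici hu hr0 (huu'.trans (le_measure_Ici_of_lt_Rnu hr0 hr))

theorem tendsto_Rnu_of_tendsto_measure_Ici {ι : Type*} {l : Filter ι} {μ : ι → Measure ℝ}
    [∀ i, IsFiniteMeasure (μ i)] {μ₀ : Measure ℝ} [IsFiniteMeasure μ₀] {S : Set ℝ}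
    (hS : S.Countable)
    (htail : ∀ r ∉ S, Tendsto (fun i => (μ i (Ici r)).toReal) l (𝓝 (μ₀ (Ici r)).toReal))
    (hu : 0 < u) (hcont : ContinuousWithinAt (Rnu μ₀) (Ioi u) u) :
    Tendsto (fun i => Rnu (μ i) u) l (𝓝 (Rnu μ₀ u)) := by
  have hSc : Dense Sᶜ := hS.dense_compl ℝ
  refine tendsto_order.2 ⟨fun a ha => ?_, fun a ha => ?_⟩
  · rcases lt_or_ge a 0 with ha0 | ha0
    · exact Eventually.of_forall fun i => ha0.trans_le (Rnu_nonneg _ _)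
    obtain ⟨u', hau', huu'⟩ :=
      ((hcont.eventually (lt_mem_nhds ha)).and self_mem_nhdsWithin).exists
    obtain ⟨r, hrS, har, hru'⟩ := hSc.exists_between hau'
    have hr0 : 0 < r := ha0.trans_lt har
    have hlim : u < (μ₀ (Ici r)).toReal := huu'.trans_le (le_measure_Ici_of_lt_Rnu hr0 hru')
    filter_upwards [(htail r hrS).eventually_const_lt hlim] with i hi
    exact har.trans_le (le_Rnu_of_le_measure_Ici hu hr0 hi.le)
  · obtain ⟨r, hrS, hur, hra⟩ := hSc.exists_between ha
    have hr0 : 0 < r := (Rnu_nonneg _ _).trans_lt hur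
    have hlim : (μ₀ (Ici r)).toReal < u :=
      lt_of_not_ge fun h => hur.not_ge (le_Rnu_of_le_measure_Ici hu hr0 h)
    filter_upwards [(htail r hrS).eventually_lt_const hlim] with i hi
    exact (le_of_not_gt fun h => hi.not_ge (le_measure_Ici_of_lt_Rnu hr0 h)).trans_lt hra

theorem countable_setOf_not_tendsto_Rnu {ι : Type*} {l : Filter ι} {μ : ι → Measure ℝ}
    [∀ i, IsFiniteMeasure (μ i)] {μ₀ : Measure ℝ} [IsFiniteMeasure μ₀] {S : Set ℝ}
    (hS : S.Countable)
    (htail : ∀ r ∉ S, Tendsto (fun i => (μ i (Ici r)).toReal) l (𝓝 (μ₀ (Ici r)).toReal)) :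
    {u : ℝ | 0 < u ∧ ¬Tendsto (fun i => Rnu (μ i) u) l (𝓝 (Rnu μ₀ u))}.Countable :=
  antitoneOn_Rnu.countable_not_continuousWithinAt.mono <| by
    rintro u ⟨hu, hnot⟩
    exact ⟨hu, fun hcont => hnot (tendsto_Rnu_of_tendsto_measure_Ici hS htail hu
      ((hcont.continuousAt (Ioi_mem_nhds hu)).continuousWithinAt))⟩

end Rnu

theorem stmt18_general (ν : ℕ → Measure ℝ) (νinf : Measure ℝ)
    (hprob : ∀ n, IsProbabilityMeasure (ν n)) (hprobinf : IsProbabilityMeasure νinf)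
    (lam : ℕ → ℝ) (laminf : ℝ) (hlam : ∀ n, 0 < lam n) (hlaminf : 0 < laminf)
    (hlamconv : Tendsto lam atTop (nhds laminf))
    (hweak : ∀ f : BoundedContinuousFunction ℝ ℝ,
      Tendsto (fun n => ∫ u, f u ∂(ν n)) atTop (nhds (∫ u, f u ∂νinf))) :
    {u : ℝ | 0 < u ∧ ¬ Tendsto (fun n => Rnu (ENNReal.ofReal (lam n) • ν n) u)
        atTop (nhds (Rnu (ENNReal.ofReal laminf • νinf) u))}.Countable ∧
    (∀ᵐ u ∂(volume.restrict (Ioi (0:ℝ))),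
      Tendsto (fun n => Rnu (ENNReal.ofReal (lam n) • ν n) u)
        atTop (nhds (Rnu (ENNReal.ofReal laminf • νinf) u))) := by
  have := fun n => (ν n).smul_finite (ENNReal.ofReal_ne_top (r := lam n))
  have := νinf.smul_finite (ENNReal.ofReal_ne_top (r := laminf))
  let P : ℕ → ProbabilityMeasure ℝ := fun n => ⟨ν n, hprob n⟩
  let P₀ : ProbabilityMeasure ℝ := ⟨νinf, hprobinf⟩
  have hP : Tendsto P atTop (𝓝 P₀) :=
    ProbabilityMeasure.tendsto_iff_forall_integral_tendsto.2 hweak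
  have htail : ∀ r ∉ {x | 0 < νinf {x}},
      Tendsto (fun n => ((ENNReal.ofReal (lam n) • ν n) (Ici r)).toReal) atTop
        (𝓝 ((ENNReal.ofReal laminf • νinf) (Ici r)).toReal) := by
    intro r hr
    have hν := ProbabilityMeasure.tendsto_measure_of_null_frontier_of_tendsto' hP (E := Ici r)
      (by simpa [frontier_Ici, P₀] using hr)
    simpa [P, P₀, ENNReal.toReal_ofReal, (hlam _).le, hlaminf.le] using
      hlamconv.mul ((ENNReal.tendsto_toReal (measure_ne_top _ _)).comp hν)
  have hbad := countable_setOf_not_tendsto_Rnu νinf.countable_setOf_measure_singleton_pos htail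
  refine ⟨hbad, ?_⟩
  rw [ae_restrict_iff' measurableSet_Ioi]
  filter_upwards [hbad.ae_notMem volume] with u hu hpos
  exact not_not.1 fun h => hu ⟨hpos, h⟩

/-- Let (ν_n) be probability measures on (0,∞) converging weakly to a
probability measure ν_∞ on (0,∞), and let (λ_n) be positive reals converging to λ_∞ > 0.
Then the set of u > 0 for which ℛ_{λ_n ν_n}(u) does not converge to ℛ_{λ_∞ ν_∞}(u) is at
most countable; in particular ℛ_{λ_n ν_n} → ℛ_{λ_∞ ν_∞} Lebesgue-a.e. on (0,∞). -/
theorem stmt18 (ν : ℕ → Measure ℝ) (νinf : Measure ℝ)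
    (hprob : ∀ n, IsProbabilityMeasure (ν n)) (hprobinf : IsProbabilityMeasure νinf)
    (hsupp : ∀ n, ν n (Iic 0) = 0) (hsuppinf : νinf (Iic 0) = 0)
    (lam : ℕ → ℝ) (laminf : ℝ) (hlam : ∀ n, 0 < lam n) (hlaminf : 0 < laminf)
    (hlamconv : Tendsto lam atTop (nhds laminf))
    (hweak : ∀ f : BoundedContinuousFunction ℝ ℝ,
      Tendsto (fun n => ∫ u, f u ∂(ν n)) atTop (nhds (∫ u, f u ∂νinf))) :
    {u : ℝ | 0 < u ∧ ¬ Tendsto (fun n => Rnu (ENNReal.ofReal (lam n) • ν n) u)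
        atTop (nhds (Rnu (ENNReal.ofReal laminf • νinf) u))}.Countable ∧
    (∀ᵐ u ∂(volume.restrict (Ioi (0:ℝ))),
      Tendsto (fun n => Rnu (ENNReal.ofReal (lam n) • ν n) u)
        atTop (nhds (Rnu (ENNReal.ofReal laminf • νinf) u))) :=
  stmt18_general ν νinf hprob hprobinf lam laminf hlam hlaminf hlamconv hweak
end
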